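/- arXiv:2510.17368 — 4 statements merged into one kernel-verified Lean document; each statement's English description precedes it below -/
import Mathlib

section
/- Let ℓ ≥ 0. For every z > 0 the integral K_ℓ(z) = ∫₀^∞ e^{−z cosh y} cosh(ℓ y) dy converges, the function K_ℓ is twice differentiable on (0,∞), and it solves the modified Bessel equation z² K_ℓ''(z) + z K_ℓ'(z) − (z² + ℓ²) K_ℓ(z) = 0 for all z > 0. -/
open Real Set MeasureTheory

/-- The modified Bessel function of the second kind of order `ℓ`, given by its integral
representation `K_ℓ(z) = ∫₀^∞ e^{−z cosh y} cosh(ℓ y) dy`. -/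
noncomputable def besselK (ℓ z : ℝ) : ℝ :=
  ∫ y in Set.Ioi (0 : ℝ), Real.exp (-z * Real.cosh y) * Real.cosh (ℓ * y)

open Filter Topology Metric

namespace BesselAux

open Nat

lemma abs_sinh_le_cosh (x : ℝ) : |Real.sinh x| ≤ Real.cosh x := by
  rw [Real.sinh_eq, Real.cosh_eq, abs_le]
  constructor <;> nlinarith [Real.exp_pos x, Real.exp_pos (-x)]

lemma one_le_cosh' (x : ℝ) : 1 ≤ Real.cosh x := by
  nlinarith [Real.cosh_sq x, Real.cosh_pos x, sq_nonneg (Real.sinh x)]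

lemma cosh_le_exp' {x : ℝ} (hx : 0 ≤ x) : Real.cosh x ≤ Real.exp x := by
  rw [Real.cosh_eq]
  have h : Real.exp (-x) ≤ Real.exp x := Real.exp_le_exp.2 (by linarith)
  linarith

/-- Key decay bound. -/
lemma bound_aux (a : ℝ) {c : ℝ} (hc : 0 < c) :
    ∃ C : ℝ, 0 ≤ C ∧ ∀ y : ℝ, 0 ≤ y →
      Real.exp (a * y - c * Real.cosh y) ≤ C * Real.exp (-y) := by
  set n : ℕ := ⌈a⌉₊ + 1 with hn
  have key : ∀ t : ℝ, 0 < t → Real.exp (-t) ≤ n ! / t ^ n := by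
    intro t ht
    have h : t ^ n ≤ Real.exp t * n ! := by
      have h0 := Real.pow_div_factorial_le_exp t ht.le n
      rw [div_le_iff₀ (by positivity)] at h0
      exact h0
    rw [le_div_iff₀ (pow_pos ht n)]
    calc Real.exp (-t) * t ^ n ≤ Real.exp (-t) * (Real.exp t * n !) :=
          mul_le_mul_of_nonneg_left h (Real.exp_pos _).le
      _ = (Real.exp (-t) * Real.exp t) * n ! := by ring
      _ = n ! := by rw [← Real.exp_add]; simp
  refine ⟨n ! * (2 / c) ^ n, by positivity, fun y hy => ?_⟩
  have hcosh : Real.exp y / 2 ≤ Real.cosh y := by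
    rw [Real.cosh_eq]
    have := (Real.exp_pos (-y)).le
    linarith
  have h2 := key ((c / 2) * Real.exp y) (by positivity)
  have han : a ≤ (n : ℝ) - 1 := by
    have h3 := Nat.le_ceil a
    have hcast : ((⌈a⌉₊ : ℕ) : ℝ) + 1 = (n : ℝ) := by rw [hn]; push_cast; ring
    linarith
  calc Real.exp (a * y - c * Real.cosh y)
      ≤ Real.exp (a * y) * Real.exp (-((c / 2) * Real.exp y)) := by
        rw [← Real.exp_add]
        apply Real.exp_le_exp.2
        nlinarith [mul_le_mul_of_nonneg_left hcosh hc.le]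
    _ ≤ Real.exp (a * y) * (n ! / ((c / 2) * Real.exp y) ^ n) :=
        mul_le_mul_of_nonneg_left h2 (Real.exp_pos _).le
    _ = n ! * (2 / c) ^ n * Real.exp (a * y - n * y) := by
        rw [Real.exp_sub, mul_pow, ← Real.exp_nat_mul]
        have h3 : Real.exp ((n : ℝ) * y) ≠ 0 := Real.exp_ne_zero _
        have h4 : (c : ℝ) ≠ 0 := ne_of_gt hc
        field_simp
        ring
        rw [← mul_pow, ← mul_pow, ← mul_pow]; norm_num [h4]
    _ ≤ n ! * (2 / c) ^ n * Real.exp (-y) := by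
        apply mul_le_mul_of_nonneg_left _ (by positivity)
        apply Real.exp_le_exp.2
        nlinarith [mul_le_mul_of_nonneg_right (show a - (n : ℝ) ≤ -1 by linarith) hy]

lemma integrable_aux (ℓ : ℝ) (hℓ : 0 ≤ ℓ) {z : ℝ} (hz : 0 < z) (n : ℕ) :
    IntegrableOn (fun y => Real.cosh y ^ n * (Real.exp (-z * Real.cosh y) * Real.cosh (ℓ * y)))
      (Set.Ioi 0) volume := by
  obtain ⟨C, hC0, hC⟩ := bound_aux ((n : ℝ) + ℓ) hz
  have hcont : Continuous fun y : ℝ =>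
      Real.cosh y ^ n * (Real.exp (-z * Real.cosh y) * Real.cosh (ℓ * y)) := by
    fun_prop
  refine Integrable.mono' ((exp_neg_integrableOn_Ioi 0 one_pos).const_mul C)
    hcont.aestronglyMeasurable.restrict ?_
  refine (ae_restrict_iff' measurableSet_Ioi).2 (ae_of_all _ fun y hy => ?_)
  have hy0 : (0 : ℝ) ≤ y := le_of_lt hy
  have h1 : Real.cosh y ≤ Real.exp y := cosh_le_exp' hy0
  have h2 : Real.cosh (ℓ * y) ≤ Real.exp (ℓ * y) := cosh_le_exp' (by positivity)
  have hc1 := (Real.cosh_pos y).le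
  have hc2 := (Real.cosh_pos (ℓ * y)).le
  rw [Real.norm_eq_abs, abs_of_nonneg (by positivity)]
  calc Real.cosh y ^ n * (Real.exp (-z * Real.cosh y) * Real.cosh (ℓ * y))
      ≤ Real.exp y ^ n * (Real.exp (-z * Real.cosh y) * Real.exp (ℓ * y)) := by
        gcongr
    _ = Real.exp (((n : ℝ) + ℓ) * y - z * Real.cosh y) := by
        rw [← Real.exp_nat_mul, ← Real.exp_add, ← Real.exp_add]
        congr 1
        ring
    _ ≤ C * Real.exp (-y) := hC y hy0
    _ = C * Real.exp (-1 * y) := by rw [neg_one_mul]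

lemma hasDerivAt_aux (ℓ : ℝ) (hℓ : 0 ≤ ℓ) (n : ℕ) {z : ℝ} (hz : 0 < z) :
    HasDerivAt (fun x => ∫ y in Set.Ioi (0 : ℝ),
        Real.cosh y ^ n * (Real.exp (-x * Real.cosh y) * Real.cosh (ℓ * y)))
      (-∫ y in Set.Ioi (0 : ℝ),
        Real.cosh y ^ (n + 1) * (Real.exp (-z * Real.cosh y) * Real.cosh (ℓ * y))) z := by
  have h := hasDerivAt_integral_of_dominated_loc_of_deriv_le
    (μ := volume.restrict (Set.Ioi (0 : ℝ))) (x₀ := z)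
    (F := fun x y => Real.cosh y ^ n * (Real.exp (-x * Real.cosh y) * Real.cosh (ℓ * y)))
    (F' := fun x y => -(Real.cosh y ^ (n + 1) * (Real.exp (-x * Real.cosh y) * Real.cosh (ℓ * y))))
    (bound := fun y =>
      Real.cosh y ^ (n + 1) * (Real.exp (-(z / 2) * Real.cosh y) * Real.cosh (ℓ * y)))
    (ball_mem_nhds z (half_pos hz))
    (Eventually.of_forall fun x =>
      (Continuous.aestronglyMeasurable (by fun_prop)).restrict)
    (integrable_aux ℓ hℓ hz n)
    ((Continuous.aestronglyMeasurable (by fun_prop)).restrict)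
    ?_ (integrable_aux ℓ hℓ (half_pos hz) (n + 1)) ?_
  · have h2 := h.2
    rwa [integral_neg] at h2
  · refine ae_of_all _ fun y x hx => ?_
    have hxz : z / 2 < x := by
      have h3 := mem_ball_iff_norm.1 hx
      rw [Real.norm_eq_abs, abs_sub_lt_iff] at h3
      linarith [h3.2]
    have hc1 := Real.cosh_pos y
    have hc2 := (Real.cosh_pos (ℓ * y)).le
    rw [norm_neg, Real.norm_eq_abs, abs_of_nonneg (by positivity)]
    have hmono : Real.exp (-x * Real.cosh y) ≤ Real.exp (-(z / 2) * Real.cosh y) :=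
      Real.exp_le_exp.2 (by nlinarith)
    exact mul_le_mul_of_nonneg_left (mul_le_mul_of_nonneg_right hmono hc2) (by positivity)
  · refine ae_of_all _ fun y x _ => ?_
    have hlin : HasDerivAt (fun x : ℝ => -x * Real.cosh y) (-Real.cosh y) x := by
      simpa using (hasDerivAt_id x).neg.mul_const (Real.cosh y)
    have hexp : HasDerivAt (fun x : ℝ => Real.exp (-x * Real.cosh y))
        (Real.exp (-x * Real.cosh y) * -Real.cosh y) x := hlin.exp
    have h4 := (hexp.mul_const (Real.cosh (ℓ * y))).const_mul (Real.cosh y ^ n)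
    convert h4 using 1
    · rfl
    ring

end BesselAux

open BesselAux in
/-- For `ℓ ≥ 0` and every `z > 0` the integral defining `K_ℓ(z)` converges,
`K_ℓ` is twice differentiable on `(0,∞)`, and it solves the modified Bessel equation
`z² K_ℓ''(z) + z K_ℓ'(z) − (z² + ℓ²) K_ℓ(z) = 0` there. -/
theorem besselK_integrable_and_solves_modified_bessel
    (ℓ : ℝ) (hℓ : 0 ≤ ℓ) :
    ∀ z : ℝ, 0 < z →
      IntegrableOn (fun y => Real.exp (-z * Real.cosh y) * Real.cosh (ℓ * y))
          (Set.Ioi 0) volume ∧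
        DifferentiableAt ℝ (besselK ℓ) z ∧
        DifferentiableAt ℝ (deriv (besselK ℓ)) z ∧
        z ^ 2 * deriv (deriv (besselK ℓ)) z + z * deriv (besselK ℓ) z
            - (z ^ 2 + ℓ ^ 2) * besselK ℓ z = 0 := by
  set K : ℕ → ℝ → ℝ := fun n x => ∫ y in Set.Ioi (0 : ℝ),
    Real.cosh y ^ n * (Real.exp (-x * Real.cosh y) * Real.cosh (ℓ * y)) with hK
  have hbK : besselK ℓ = K 0 := by
    funext x
    simp [besselK, hK]
  have hD0 : ∀ x : ℝ, 0 < x → HasDerivAt (besselK ℓ) (-K 1 x) x := by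
    intro x hx
    rw [hbK]
    simpa [hK] using hasDerivAt_aux ℓ hℓ 0 hx
  have hderiv1 : ∀ x : ℝ, 0 < x → deriv (besselK ℓ) x = -K 1 x := fun x hx => (hD0 x hx).deriv
  intro z hz
  have hint0 : IntegrableOn (fun y => Real.exp (-z * Real.cosh y) * Real.cosh (ℓ * y))
      (Set.Ioi 0) volume := by
    simpa using integrable_aux ℓ hℓ hz 0
  have heq : deriv (besselK ℓ) =ᶠ[𝓝 z] fun x => -K 1 x := by
    filter_upwards [isOpen_Ioi.mem_nhds hz] with x hx
    exact hderiv1 x hx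
  have hD1 : HasDerivAt (deriv (besselK ℓ)) (K 2 z) z := by
    have h1 : HasDerivAt (fun x => -K 1 x) (K 2 z) z := by
      simpa [hK] using (hasDerivAt_aux ℓ hℓ 1 hz).fun_neg
    exact h1.congr_of_eventuallyEq heq
  refine ⟨hint0, (hD0 z hz).differentiableAt, hD1.differentiableAt, ?_⟩
  rw [hD1.deriv, hderiv1 z hz, hbK]
  -- FTC part
  set G : ℝ → ℝ := fun y =>
    Real.exp (-z * Real.cosh y) *
      (-(z * Real.sinh y * Real.cosh (ℓ * y)) - ℓ * Real.sinh (ℓ * y)) with hG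
  set f' : ℝ → ℝ := fun y =>
    (z ^ 2 * Real.cosh y ^ 2 - z * Real.cosh y - (z ^ 2 + ℓ ^ 2)) *
      (Real.exp (-z * Real.cosh y) * Real.cosh (ℓ * y)) with hf'
  have hGderiv : ∀ y : ℝ, HasDerivAt G (f' y) y := by
    intro y
    have hu : HasDerivAt (fun y => Real.exp (-z * Real.cosh y))
        (Real.exp (-z * Real.cosh y) * (-z * Real.sinh y)) y := by
      exact (((Real.hasDerivAt_cosh y).const_mul (-z)).congr_deriv (by ring)).exp
    have hly : HasDerivAt (fun y : ℝ => ℓ * y) ℓ y := by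
      simpa using (hasDerivAt_id y).const_mul ℓ
    have hcl : HasDerivAt (fun y => Real.cosh (ℓ * y)) (Real.sinh (ℓ * y) * ℓ) y := hly.cosh
    have hsl : HasDerivAt (fun y => Real.sinh (ℓ * y)) (Real.cosh (ℓ * y) * ℓ) y := hly.sinh
    have h1 : HasDerivAt (fun y => z * Real.sinh y * Real.cosh (ℓ * y))
        (z * Real.cosh y * Real.cosh (ℓ * y) + z * Real.sinh y * (Real.sinh (ℓ * y) * ℓ)) y := by
      exact (((Real.hasDerivAt_sinh y).const_mul z).mul hcl).congr_deriv (by ring)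
    have hv : HasDerivAt
        (fun y => -(z * Real.sinh y * Real.cosh (ℓ * y)) - ℓ * Real.sinh (ℓ * y))
        (-(z * Real.cosh y * Real.cosh (ℓ * y) + z * Real.sinh y * (Real.sinh (ℓ * y) * ℓ))
          - ℓ * (Real.cosh (ℓ * y) * ℓ)) y := h1.neg.sub (hsl.const_mul ℓ)
    have hG' := hu.mul hv
    have hGd : HasDerivAt G
        (Real.exp (-z * Real.cosh y) * (-z * Real.sinh y) *
            (-(z * Real.sinh y * Real.cosh (ℓ * y)) - ℓ * Real.sinh (ℓ * y)) +
          Real.exp (-z * Real.cosh y) *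
            (-(z * Real.cosh y * Real.cosh (ℓ * y) + z * Real.sinh y * (Real.sinh (ℓ * y) * ℓ))
              - ℓ * (Real.cosh (ℓ * y) * ℓ))) y := hG'
    convert hGd using 1
    have hcs : Real.cosh y ^ 2 = Real.sinh y ^ 2 + 1 := Real.cosh_sq y
    simp only [hf']
    linear_combination (z ^ 2 * Real.exp (-z * Real.cosh y) * Real.cosh (ℓ * y)) * hcs
  have hint1 := integrable_aux ℓ hℓ hz 1
  have hint2 := integrable_aux ℓ hℓ hz 2
  have hint0' := integrable_aux ℓ hℓ hz 0
  have hf'int : IntegrableOn f' (Set.Ioi 0) volume := by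
    have hrw : f' = fun y =>
        z ^ 2 * (Real.cosh y ^ 2 * (Real.exp (-z * Real.cosh y) * Real.cosh (ℓ * y)))
        - z * (Real.cosh y ^ 1 * (Real.exp (-z * Real.cosh y) * Real.cosh (ℓ * y)))
        - (z ^ 2 + ℓ ^ 2) * (Real.cosh y ^ 0 * (Real.exp (-z * Real.cosh y) * Real.cosh (ℓ * y))) := by
      funext y
      simp only [hf']
      ring
    rw [hrw]
    exact ((hint2.const_mul _).sub (hint1.const_mul _)).sub (hint0'.const_mul _)
  obtain ⟨C, hC0, hC⟩ := bound_aux (1 + ℓ) hz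
  have htend : Tendsto G atTop (𝓝 0) := by
    apply squeeze_zero_norm' (a := fun y => (z + ℓ) * C * Real.exp (-y))
    · filter_upwards [eventually_ge_atTop (0 : ℝ)] with y hy
      have h1 : Real.cosh y ≤ Real.exp y := cosh_le_exp' hy
      have h2 : Real.cosh (ℓ * y) ≤ Real.exp (ℓ * y) := cosh_le_exp' (by positivity)
      have hc1 : (1 : ℝ) ≤ Real.cosh y := one_le_cosh' y
      have hc2 := (Real.cosh_pos (ℓ * y)).le
      have hs1 : |Real.sinh y| ≤ Real.cosh y := abs_sinh_le_cosh y
      have hs2 : |Real.sinh (ℓ * y)| ≤ Real.cosh (ℓ * y) := abs_sinh_le_cosh (ℓ * y)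
      have hBB := hC y hy
      rw [Real.norm_eq_abs, hG, abs_mul, abs_of_nonneg (Real.exp_pos _).le]
      have hb1 : |(-(z * Real.sinh y * Real.cosh (ℓ * y)) - ℓ * Real.sinh (ℓ * y))|
          ≤ (z + ℓ) * (Real.cosh y * Real.cosh (ℓ * y)) := by
        have ht1 : |(-(z * Real.sinh y * Real.cosh (ℓ * y)) - ℓ * Real.sinh (ℓ * y))|
            ≤ |z * Real.sinh y * Real.cosh (ℓ * y)| + |ℓ * Real.sinh (ℓ * y)| := by
          calc |(-(z * Real.sinh y * Real.cosh (ℓ * y)) - ℓ * Real.sinh (ℓ * y))|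
              ≤ |(-(z * Real.sinh y * Real.cosh (ℓ * y)))| + |ℓ * Real.sinh (ℓ * y)| :=
                abs_sub _ _
            _ = _ := by rw [abs_neg]
        have ht2 : |z * Real.sinh y * Real.cosh (ℓ * y)|
            ≤ z * (Real.cosh y * Real.cosh (ℓ * y)) := by
          rw [abs_mul, abs_mul, abs_of_nonneg hz.le, abs_of_nonneg hc2]
          nlinarith [mul_le_mul_of_nonneg_right hs1 hc2]
        have ht3 : |ℓ * Real.sinh (ℓ * y)| ≤ ℓ * (Real.cosh y * Real.cosh (ℓ * y)) := by
          rw [abs_mul, abs_of_nonneg hℓ]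
          nlinarith [mul_le_mul_of_nonneg_left hs2 hℓ,
            mul_le_mul_of_nonneg_right hc1 hc2, mul_le_mul_of_nonneg_left
              (mul_le_mul_of_nonneg_right hc1 hc2) hℓ]
        calc |(-(z * Real.sinh y * Real.cosh (ℓ * y)) - ℓ * Real.sinh (ℓ * y))|
            ≤ |z * Real.sinh y * Real.cosh (ℓ * y)| + |ℓ * Real.sinh (ℓ * y)| := ht1
          _ ≤ z * (Real.cosh y * Real.cosh (ℓ * y)) + ℓ * (Real.cosh y * Real.cosh (ℓ * y)) := by
              linarith
          _ = (z + ℓ) * (Real.cosh y * Real.cosh (ℓ * y)) := by ring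
      calc Real.exp (-z * Real.cosh y) *
            |(-(z * Real.sinh y * Real.cosh (ℓ * y)) - ℓ * Real.sinh (ℓ * y))|
          ≤ Real.exp (-z * Real.cosh y) * ((z + ℓ) * (Real.cosh y * Real.cosh (ℓ * y))) :=
            mul_le_mul_of_nonneg_left hb1 (Real.exp_pos _).le
        _ = (z + ℓ) * (Real.exp (-z * Real.cosh y) * (Real.cosh y * Real.cosh (ℓ * y))) := by
            ring
        _ ≤ (z + ℓ) * (Real.exp (-z * Real.cosh y) * (Real.exp y * Real.exp (ℓ * y))) := by
            apply mul_le_mul_of_nonneg_left _ (add_nonneg hz.le hℓ)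
            exact mul_le_mul_of_nonneg_left
              (mul_le_mul h1 h2 hc2 (Real.exp_pos y).le) (Real.exp_pos _).le
        _ = (z + ℓ) * Real.exp ((1 + ℓ) * y - z * Real.cosh y) := by
            rw [← Real.exp_add, ← Real.exp_add]
            congr 2
            ring
        _ ≤ (z + ℓ) * (C * Real.exp (-y)) :=
            mul_le_mul_of_nonneg_left hBB (add_nonneg hz.le hℓ)
        _ = (z + ℓ) * C * Real.exp (-y) := by ring
    · simpa using Real.tendsto_exp_neg_atTop_nhds_zero.const_mul ((z + ℓ) * C)
  have hGcont : ContinuousWithinAt G (Set.Ici 0) 0 :=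
    (hGderiv 0).continuousAt.continuousWithinAt
  have hFTC : ∫ y in Set.Ioi (0 : ℝ), f' y = 0 - G 0 :=
    integral_Ioi_of_hasDerivAt_of_tendsto hGcont (fun x _ => hGderiv x) hf'int htend
  have hG0 : G 0 = 0 := by
    simp [hG]
  rw [hG0, sub_zero] at hFTC
  have hcomb : ∫ y in Set.Ioi (0 : ℝ), f' y
      = z ^ 2 * K 2 z - z * K 1 z - (z ^ 2 + ℓ ^ 2) * K 0 z := by
    simp only [hK]
    have e : f' = fun y =>
        (z ^ 2 * (Real.cosh y ^ 2 * (Real.exp (-z * Real.cosh y) * Real.cosh (ℓ * y)))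
          - z * (Real.cosh y ^ 1 * (Real.exp (-z * Real.cosh y) * Real.cosh (ℓ * y))))
        - (z ^ 2 + ℓ ^ 2) * (Real.cosh y ^ 0 * (Real.exp (-z * Real.cosh y) * Real.cosh (ℓ * y))) := by
      funext y
      simp only [hf']
      ring
    have hA : Integrable (fun y => z ^ 2 *
        (Real.cosh y ^ 2 * (Real.exp (-z * Real.cosh y) * Real.cosh (ℓ * y))))
        (volume.restrict (Set.Ioi 0)) := hint2.const_mul _
    have hB : Integrable (fun y => z *
        (Real.cosh y ^ 1 * (Real.exp (-z * Real.cosh y) * Real.cosh (ℓ * y))))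
        (volume.restrict (Set.Ioi 0)) := hint1.const_mul _
    have hCc : Integrable (fun y => (z ^ 2 + ℓ ^ 2) *
        (Real.cosh y ^ 0 * (Real.exp (-z * Real.cosh y) * Real.cosh (ℓ * y))))
        (volume.restrict (Set.Ioi 0)) := hint0'.const_mul _
    have hAB : Integrable (fun y => z ^ 2 *
        (Real.cosh y ^ 2 * (Real.exp (-z * Real.cosh y) * Real.cosh (ℓ * y)))
        - z * (Real.cosh y ^ 1 * (Real.exp (-z * Real.cosh y) * Real.cosh (ℓ * y))))
        (volume.restrict (Set.Ioi 0)) := hA.sub hB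
    rw [e, integral_sub hAB hCc, integral_sub hA hB,
      integral_const_mul, integral_const_mul, integral_const_mul]
  rw [hcomb] at hFTC
  linarith
end

section
/- Let μ > 0 and b(t) = μ/(1+t). Let B, B̃, R > 0, p, q > 1, r, ρ ∈ ℝ, and let F, G ∈ C²([0,T)) satisfy F''(t) + F'(t) ≥ B (R+t)^{−r} |G(t)|^p and G''(t) + b(t) G'(t) ≥ B̃ (R+t)^{−ρ} |F(t)|^q for all t ∈ [0,T), together with F(0), F'(0), G(0), G'(0) ≥ 0. Suppose that for some T₀ > 0, A > 0 and a ∈ ℝ one has F(t) ≥ A t^a for all t ∈ [T₀,T), and that a(pq−1) + 2p + 1 > ρp + r. Then there exist constants A₀ = A₀(a,T₀,R,p,q,r,ρ,μ,B,B̃) > 0 and C > 0 independent of A such that if A ∈ (0, A₀], then T is finite and T ≤ C A^{−1/γ}, where γ = a + (2p + 1 − (ρp + r))/(pq−1). -/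
open Real Set MeasureTheory

set_option maxHeartbeats 1000000 in
private lemma mono_cmp {c d : ℝ} {f f' g g' : ℝ → ℝ} (hcd : c ≤ d)
    (hf : ∀ x ∈ Icc c d, HasDerivWithinAt f (f' x) (Icc c d) x)
    (hg : ∀ x ∈ Icc c d, HasDerivWithinAt g (g' x) (Icc c d) x)
    (hle : ∀ x ∈ Icc c d, f' x ≤ g' x) :
    f d - f c ≤ g d - g c := by
  have h : MonotoneOn (fun x => g x - f x) (Icc c d) := by
    apply monotoneOn_of_hasDerivWithinAt_nonneg (f' := fun x => g' x - f' x) (convex_Icc c d)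
    · exact fun x hx => ((hg x hx).sub (hf x hx)).continuousWithinAt
    · exact fun x hx => (((hg x (interior_subset hx)).sub
        (hf x (interior_subset hx)))).mono interior_subset
    · exact fun x hx => sub_nonneg.2 (hle x (interior_subset hx))
  have h2 := h (left_mem_Icc.2 hcd) (right_mem_Icc.2 hcd) hcd
  simp only at h2
  linarith

private lemma coeff_bound {R ρ u : ℝ} (hR : 0 < R) (hu : 1 ≤ u) :
    min 1 ((1 + R) ^ (-ρ)) * u ^ (-ρ) ≤ (R + u) ^ (-ρ) := by
  have hu0 : (0:ℝ) < u := lt_of_lt_of_le one_pos hu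
  rcases le_or_gt 0 ρ with h | h
  · calc min 1 ((1+R)^(-ρ)) * u^(-ρ) ≤ (1+R)^(-ρ) * u^(-ρ) :=
        mul_le_mul_of_nonneg_right (min_le_right _ _) (rpow_nonneg hu0.le _)
    _ = ((1+R)*u)^(-ρ) := (Real.mul_rpow (by linarith) hu0.le).symm
    _ ≤ (R+u)^(-ρ) :=
        Real.rpow_le_rpow_of_nonpos (by linarith) (by nlinarith) (by linarith)
  · calc min 1 ((1+R)^(-ρ)) * u^(-ρ) ≤ 1 * u^(-ρ) :=
        mul_le_mul_of_nonneg_right (min_le_left _ _) (rpow_nonneg hu0.le _)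
    _ = u^(-ρ) := one_mul _
    _ ≤ (R+u)^(-ρ) := Real.rpow_le_rpow hu0.le (by linarith) (by linarith)

private lemma deriv_shift_rpow (L e : ℝ) (he : 1 ≤ e) (x : ℝ) :
    HasDerivAt (fun x : ℝ => (x - L) ^ e) (e * (x - L) ^ (e - 1)) x := by
  have h0 : HasDerivAt (fun x : ℝ => x - L) 1 x := (hasDerivAt_id x).sub_const L
  have h1 := (Real.hasDerivAt_rpow_const (x := x - L) (p := e) (Or.inr he)).comp x h0
  rw [mul_one] at h1; exact h1

lemma key_int {L t c η β : ℝ} (hL1 : 1 ≤ L) (hLt : L ≤ t)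
    (hc : 0 ≤ c) (hη : η ≤ 0) (hβ : 0 ≤ β) {f f' : ℝ → ℝ}
    (hf : ∀ x ∈ Icc L t, HasDerivWithinAt f (f' x) (Icc L t) x)
    (hf0 : 0 ≤ f L)
    (hb : ∀ x ∈ Icc L t, c * x ^ η * (x - L) ^ β ≤ f' x) :
    c * t ^ η * (t - L) ^ (β + 1) / (β + 1) ≤ f t := by
  have hβ1 : (0:ℝ) < β + 1 := by linarith
  have hg : ∀ x ∈ Icc L t, HasDerivWithinAt
      (fun x => c * t ^ η / (β + 1) * (x - L) ^ (β + 1)) (c * t ^ η * (x - L) ^ β) (Icc L t) x := by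
    intro x hx
    have h2 := ((deriv_shift_rpow L (β+1) (by linarith) x).const_mul
        (c * t ^ η / (β+1))).hasDerivWithinAt (s := Icc L t)
    have he : c * t ^ η / (β+1) * ((β+1) * (x - L) ^ (β + 1 - 1)) = c * t ^ η * (x - L) ^ β := by
      have : β + 1 - 1 = β := by ring
      rw [this]; field_simp
    rwa [he] at h2
  have hle : ∀ x ∈ Icc L t, c * t ^ η * (x - L) ^ β ≤ f' x := by
    intro x hx
    refine le_trans ?_ (hb x hx)
    have hx0 : (0:ℝ) < x := by have := hx.1; linarith
    have : t ^ η ≤ x ^ η := Real.rpow_le_rpow_of_nonpos hx0 hx.2 hη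
    have h1 : 0 ≤ (x - L) ^ β := Real.rpow_nonneg (by linarith [hx.1]) _
    nlinarith [mul_le_mul_of_nonneg_left this hc]
  have hcmp := mono_cmp hLt hg hf hle
  have hzero : c * t ^ η / (β + 1) * ((L : ℝ) - L) ^ (β + 1) = 0 := by
    simp [Real.zero_rpow (by linarith : β + 1 ≠ 0)]
  simp only [hzero] at hcmp
  have : c * t ^ η / (β + 1) * (t - L) ^ (β + 1) ≤ f t - f L := by simpa using hcmp
  have hrw : c * t ^ η * (t - L) ^ (β + 1) / (β + 1) = c * t ^ η / (β + 1) * (t - L) ^ (β+1) := by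
    ring
  rw [hrw]; linarith

lemma key_exp {L t κ m : ℝ} (hLt : L ≤ t) (hκ : 0 ≤ κ) (hm : 0 ≤ m)
    {F F' : ℝ → ℝ}
    (hF : ∀ x ∈ Icc L t, HasDerivWithinAt F (F' x) (Icc L t) x)
    (hF0 : 0 ≤ F L)
    (hb : ∀ x ∈ Icc L t, κ * (x - L) ^ m ≤ F x + F' x) :
    κ * (t - L) ^ (m + 1) / ((t - L) + (m + 1)) ≤ F t := by
  have hden : (0:ℝ) < (t - L) + (m + 1) := by linarith
  set den := (t - L) + (m + 1) with hdef
  have hD : ∀ x ∈ Icc L t, HasDerivWithinAt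
      (fun x => Real.exp x * (F x - κ / den * (x - L) ^ (m + 1)))
      (Real.exp x * (F x - κ / den * (x - L) ^ (m+1))
        + Real.exp x * (F' x - κ / den * ((m+1) * (x - L) ^ m))) (Icc L t) x := by
    intro x hx
    have hφ : HasDerivWithinAt (fun x => F x - κ / den * (x - L) ^ (m + 1))
        (F' x - κ / den * ((m+1) * (x - L) ^ (m + 1 - 1))) (Icc L t) x :=
      (hF x hx).sub (((deriv_shift_rpow L (m+1) (by linarith) x).const_mul
        (κ / den)).hasDerivWithinAt)
    have hmm : m + 1 - 1 = m := by ring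
    rw [hmm] at hφ
    exact ((Real.hasDerivAt_exp x).hasDerivWithinAt).mul hφ
  have hnn : ∀ x ∈ Icc L t, 0 ≤ Real.exp x * (F x - κ / den * (x - L) ^ (m+1))
        + Real.exp x * (F' x - κ / den * ((m+1) * (x - L) ^ m)) := by
    intro x hx
    have hxL : 0 ≤ x - L := by linarith [hx.1]
    have hsplit : (x - L) ^ (m + 1) = (x - L) ^ m * (x - L) := by
      rw [Real.rpow_add' hxL (by linarith), Real.rpow_one]
    have hkey : κ / den * (x - L) ^ (m+1) + κ / den * ((m+1) * (x - L) ^ m)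
        ≤ κ * (x - L) ^ m := by
      rw [hsplit]
      have h1 : 0 ≤ (x - L) ^ m := Real.rpow_nonneg hxL _
      have h2 : κ / den * ((x - L) ^ m * (x - L)) + κ / den * ((m+1) * (x - L) ^ m)
          = κ / den * (x - L) ^ m * ((x - L) + (m + 1)) := by ring
      rw [h2]
      have h3 : (x - L) + (m+1) ≤ den := by rw [hdef]; linarith [hx.2]
      have h4 : 0 ≤ κ / den * (x - L) ^ m := by positivity
      calc κ / den * (x - L) ^ m * ((x - L) + (m+1)) ≤ κ / den * (x - L) ^ m * den :=
            mul_le_mul_of_nonneg_left h3 h4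
        _ = κ * (x - L) ^ m := by field_simp
    have h5 := hb x hx
    have h6 : 0 ≤ (F x - κ / den * (x - L) ^ (m+1)) + (F' x - κ / den * ((m+1) * (x - L) ^ m)) := by
      linarith
    calc (0:ℝ) ≤ Real.exp x * ((F x - κ / den * (x - L) ^ (m+1))
          + (F' x - κ / den * ((m+1) * (x - L) ^ m))) := mul_nonneg (Real.exp_pos x).le h6
      _ = _ := by ring
  have hcmp := mono_cmp hLt (f := fun _ => (0:ℝ)) (f' := fun _ => (0:ℝ))
    (fun x _ => (hasDerivWithinAt_const x _ 0)) hD hnn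
  simp only [sub_zero, sub_self] at hcmp
  have hL0 : Real.exp L * (F L - κ / den * (0:ℝ) ^ (m + 1)) = Real.exp L * F L := by
    simp [Real.zero_rpow (by linarith : m + 1 ≠ 0)]
  rw [hL0] at hcmp
  have h7 : 0 ≤ Real.exp t * (F t - κ / den * (t - L) ^ (m+1)) := by
    have : 0 ≤ Real.exp L * F L := mul_nonneg (Real.exp_pos L).le hF0
    linarith
  have h8 : 0 ≤ F t - κ / den * (t - L) ^ (m+1) :=
    (mul_nonneg_iff_of_pos_left (Real.exp_pos t)).mp h7
  have h9 : κ * (t - L) ^ (m+1) / den = κ / den * (t - L) ^ (m+1) := by ring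
  rw [h9]; linarith

set_option maxHeartbeats 2000000 in
private lemma loop'
    (μ B B' R p q r ρ : ℝ) {T L : ℝ}
    (hμ : 0 < μ) (hB : 0 < B) (hB' : 0 < B') (hR : 0 < R)
    (hp : 1 < p) (hq : 1 < q) (hL1 : 1 ≤ L)
    {F F' F'' G G' G'' : ℝ → ℝ}
    (hF : ∀ t ∈ Ico (0:ℝ) T, HasDerivWithinAt F (F' t) (Ico 0 T) t)
    (hF' : ∀ t ∈ Ico (0:ℝ) T, HasDerivWithinAt F' (F'' t) (Ico 0 T) t)
    (hG : ∀ t ∈ Ico (0:ℝ) T, HasDerivWithinAt G (G' t) (Ico 0 T) t)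
    (hG' : ∀ t ∈ Ico (0:ℝ) T, HasDerivWithinAt G' (G'' t) (Ico 0 T) t)
    (hFineq : ∀ t ∈ Ico (0:ℝ) T, B * (R + t) ^ (-r) * |G t| ^ p ≤ F'' t + F' t)
    (hGineq : ∀ t ∈ Ico (0:ℝ) T, B' * (R + t) ^ (-ρ) * |F t| ^ q ≤ G'' t + μ / (1 + t) * G' t)
    (hFpos : ∀ t ∈ Ico (0:ℝ) T, 0 ≤ F t)
    (hF'pos : ∀ t ∈ Ico (0:ℝ) T, 0 ≤ F' t)
    (hGpos : ∀ t ∈ Ico (0:ℝ) T, 0 ≤ G t)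
    (hG'pos : ∀ t ∈ Ico (0:ℝ) T, 0 ≤ G' t)
    {M θ β : ℝ} (hM : 0 ≤ M) (hβ : 0 ≤ β) (hθ : μ + |ρ| + |r| ≤ q * θ)
    (hinv : ∀ t ∈ Ico (0:ℝ) T, L ≤ t → M * t ^ (-θ) * (t - L) ^ β ≤ F t) :
    ∀ t ∈ Ico (0:ℝ) T, L ≤ t →
      B * min 1 ((1+R) ^ (-r)) * (2 ^ (-μ) * B' * min 1 ((1+R) ^ (-ρ))) ^ p / 2
        * M ^ (p*q)
        / (((β*q+1)*(β*q+2)) ^ p * (((β*q+2)*p+1) * ((β*q+2)*p+2)))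
        * t ^ (-(p*q*θ + ρ*p + r + 1)) * (t - L) ^ (p*q*β + 2*p + 2) ≤ F t := by
  intro t ht hLt
  have hp0 : (0:ℝ) < p := by linarith
  have hq0 : (0:ℝ) < q := by linarith
  have hsub : Icc L t ⊆ Ico (0:ℝ) T :=
    fun x hx => ⟨by linarith [hx.1], lt_of_le_of_lt hx.2 ht.2⟩
  have ht1 : (1:ℝ) ≤ t := le_trans hL1 hLt
  have ht0 : (0:ℝ) < t := by linarith
  -- abbreviations
  set m1ρ := min 1 ((1+R) ^ (-ρ)) with hm1ρ
  set m1r := min 1 ((1+R) ^ (-r)) with hm1r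
  have hm1ρ0 : 0 < m1ρ := lt_min one_pos (Real.rpow_pos_of_pos (by linarith) _)
  have hm1r0 : 0 < m1r := lt_min one_pos (Real.rpow_pos_of_pos (by linarith) _)
  set cA := B' * m1ρ * M ^ q with hcA
  have hcA0 : 0 ≤ cA := by positivity
  set ηA := -(ρ + θ*q) with hηA
  have habsρ := abs_nonneg ρ
  have habsr := abs_nonneg r
  have hρ1 := neg_abs_le ρ
  have hρ2 := le_abs_self ρ
  have hr1 := neg_abs_le r
  have hr2 := le_abs_self r
  have hηA0 : ηA ≤ 0 := by rw [hηA]; nlinarith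
  have hμηA : μ + ηA ≤ 0 := by rw [hηA]; nlinarith
  have hρθq : μ + |r| ≤ ρ + θ*q := by nlinarith
  set ηD := -r + ηA*p with hηD
  have hηD0 : ηD ≤ 0 := by
    rw [hηD, hηA]
    nlinarith [mul_le_mul_of_nonneg_right hρθq (le_of_lt hp0)]
  -- Step 2 : lower bound for RHS of the G-inequality
  have hstep2 : ∀ u ∈ Icc L t, cA * u ^ ηA * (u - L) ^ (β*q) ≤ G'' u + μ/(1+u) * G' u := by
    intro u hu
    have huT := hsub hu
    have hu1 : (1:ℝ) ≤ u := le_trans hL1 hu.1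
    have hu0 : (0:ℝ) < u := by linarith
    have huL : (0:ℝ) ≤ u - L := by linarith [hu.1]
    have hFu := hinv u huT hu.1
    refine le_trans ?_ (hGineq u huT)
    have habs : |F u| = F u := abs_of_nonneg (hFpos u huT)
    have hexpand : (M * u ^ (-θ) * (u - L) ^ β) ^ q
        = M ^ q * u ^ (-θ*q) * (u - L) ^ (β*q) := by
      rw [Real.mul_rpow (mul_nonneg hM (Real.rpow_nonneg hu0.le _)) (Real.rpow_nonneg huL _),
        Real.mul_rpow hM (Real.rpow_nonneg hu0.le _),
        ← Real.rpow_mul hu0.le, ← Real.rpow_mul huL]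
    have hsplit : u ^ ηA = u ^ (-ρ) * u ^ (-θ*q) := by
      rw [← Real.rpow_add hu0]; congr 1; rw [hηA]; ring
    calc cA * u ^ ηA * (u - L) ^ (β*q)
        = B' * (m1ρ * u ^ (-ρ)) * ((M * u ^ (-θ) * (u - L) ^ β) ^ q) := by
          rw [hexpand, hsplit, hcA]; ring
      _ ≤ B' * ((R+u) ^ (-ρ)) * ((F u) ^ q) := by
          apply mul_le_mul
          · exact mul_le_mul_of_nonneg_left (coeff_bound hR hu1) hB'.le
          · exact Real.rpow_le_rpow (by positivity) hFu hq0.le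
          · positivity
          · positivity
      _ = B' * (R+u) ^ (-ρ) * |F u| ^ q := by rw [habs]
  -- Step 4 : lower bound for G'
  have hstep4 : ∀ v ∈ Icc L t,
      cA * 2 ^ (-μ) / (β*q+1) * v ^ ηA * (v - L) ^ (β*q+1) ≤ G' v := by
    intro v hv
    have hv1 : (1:ℝ) ≤ v := le_trans hL1 hv.1
    have hv0 : (0:ℝ) < v := by linarith
    have hsubv : Icc L v ⊆ Icc L t := Icc_subset_Icc le_rfl hv.2
    have hβq1 : (0:ℝ) < β*q + 1 := by positivity
    -- W = (1+s)^μ * G' s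
    have hW : ∀ x ∈ Icc L v, HasDerivWithinAt (fun s => (1+s) ^ μ * G' s)
        ((1+x) ^ μ * (G'' x + μ/(1+x) * G' x)) (Icc L v) x := by
      intro x hx
      have hx1 : (1:ℝ) ≤ x := le_trans hL1 hx.1
      have h1x : (0:ℝ) < 1 + x := by linarith
      have hgx : HasDerivWithinAt G' (G'' x) (Icc L v) x :=
        (hG' x (hsub (hsubv hx))).mono (subset_trans hsubv hsub)
      have hw : HasDerivAt (fun s : ℝ => (1+s) ^ μ) (μ * (1+x) ^ (μ-1)) x := by
        have h0 : HasDerivAt (fun s : ℝ => 1 + s) 1 x := (hasDerivAt_id x).const_add 1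
        have h1 := (Real.hasDerivAt_rpow_const (x := 1+x) (p := μ) (Or.inl h1x.ne')).comp x h0
        rw [mul_one] at h1; exact h1
      have h2 := (hw.hasDerivWithinAt).mul hgx
      have heq : μ * (1+x) ^ (μ-1) * G' x + (1+x) ^ μ * G'' x
          = (1+x) ^ μ * (G'' x + μ/(1+x) * G' x) := by
        rw [show μ - 1 = μ + (-1) by ring, Real.rpow_add h1x, Real.rpow_neg_one]
        field_simp
        ring
      rwa [heq] at h2
    have hWkey := key_int hL1 hv.1 hcA0 hμηA (by positivity : (0:ℝ) ≤ β*q)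
      hW (by
        have : (0:ℝ) ≤ G' L := hG'pos L (hsub ⟨le_rfl, hLt⟩)
        positivity)
      (by
        intro x hx
        have hx1 : (1:ℝ) ≤ x := le_trans hL1 hx.1
        have hx0 : (0:ℝ) < x := by linarith
        have h1 := hstep2 x (hsubv hx)
        have h2 : (0:ℝ) ≤ cA * x ^ ηA * (x - L) ^ (β*q) := by
          have : (0:ℝ) ≤ x - L := by linarith [hx.1]
          positivity
        have h3 : x ^ μ ≤ (1+x) ^ μ := Real.rpow_le_rpow hx0.le (by linarith) hμ.le
        have h4 : cA * x ^ ηA * (x - L) ^ (β*q) * x ^ μ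
            ≤ (1+x) ^ μ * (G'' x + μ/(1+x) * G' x) := by
          calc cA * x ^ ηA * (x - L) ^ (β*q) * x ^ μ
              ≤ cA * x ^ ηA * (x - L) ^ (β*q) * (1+x) ^ μ :=
                mul_le_mul_of_nonneg_left h3 h2
            _ = (1+x) ^ μ * (cA * x ^ ηA * (x - L) ^ (β*q)) := by ring
            _ ≤ (1+x) ^ μ * (G'' x + μ/(1+x) * G' x) :=
                mul_le_mul_of_nonneg_left h1 (Real.rpow_nonneg (by linarith) _)
        calc cA * x ^ (μ + ηA) * (x - L) ^ (β*q)
            = cA * x ^ ηA * (x - L) ^ (β*q) * x ^ μ := by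
              rw [Real.rpow_add hx0]; ring
          _ ≤ _ := h4)
    -- now (1+v)^μ * G' v ≥ cA * v^(μ+ηA) * (v-L)^(βq+1)/(βq+1)
    have h2v : (1+v) ^ μ ≤ 2 ^ μ * v ^ μ := by
      rw [← Real.mul_rpow (by norm_num) hv0.le]
      exact Real.rpow_le_rpow (by linarith) (by linarith) hμ.le
    have hG'v : (0:ℝ) ≤ G' v := hG'pos v (hsub hv)
    have h5 : cA * v ^ (μ + ηA) * (v - L) ^ (β*q+1) / (β*q+1) ≤ 2 ^ μ * v ^ μ * G' v :=
      le_trans hWkey (mul_le_mul_of_nonneg_right h2v hG'v)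
    have h2μ : (0:ℝ) < 2 ^ μ := Real.rpow_pos_of_pos (by norm_num) μ
    have hvμ : (0:ℝ) < v ^ μ := Real.rpow_pos_of_pos hv0 μ
    have h6 : cA * 2 ^ (-μ) / (β*q+1) * v ^ ηA * (v - L) ^ (β*q+1) * (2 ^ μ * v ^ μ)
        = cA * v ^ (μ + ηA) * (v - L) ^ (β*q+1) / (β*q+1) := by
      rw [Real.rpow_add hv0, Real.rpow_neg (by norm_num : (0:ℝ) ≤ 2)]
      field_simp
    have h7 : cA * 2 ^ (-μ) / (β*q+1) * v ^ ηA * (v - L) ^ (β*q+1) * (2 ^ μ * v ^ μ)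
        ≤ G' v * (2 ^ μ * v ^ μ) := by rw [h6]; linarith [h5]
    exact le_of_mul_le_mul_right h7 (by positivity)
  -- Step 5 : lower bound for G
  have hstep5 : ∀ v ∈ Icc L t,
      cA * 2 ^ (-μ) / ((β*q+1)*(β*q+2)) * v ^ ηA * (v - L) ^ (β*q+2) ≤ G v := by
    intro v hv
    have hsubv : Icc L v ⊆ Icc L t := Icc_subset_Icc le_rfl hv.2
    have hβq1 : (0:ℝ) < β*q + 1 := by positivity
    have hkey := key_int hL1 hv.1 (by positivity : (0:ℝ) ≤ cA * 2 ^ (-μ) / (β*q+1)) hηA0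
      (by positivity : (0:ℝ) ≤ β*q+1)
      (fun x hx => (hG x (hsub (hsubv hx))).mono (subset_trans hsubv hsub))
      (hGpos L (hsub ⟨le_rfl, hLt⟩))
      (fun x hx => hstep4 x (hsubv hx))
    refine le_trans (le_of_eq ?_) hkey
    rw [show β*q+1+1 = β*q+2 by ring]
    field_simp
  -- Step 6/7 : lower bound for F + F'
  set cC := cA * 2 ^ (-μ) / ((β*q+1)*(β*q+2)) with hcC
  have hβq1 : (0:ℝ) < β*q + 1 := by positivity
  have hβq2 : (0:ℝ) < β*q + 2 := by positivity
  have hcC0 : 0 ≤ cC := by positivity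
  set ν := (β*q+2)*p with hν
  have hν0 : (0:ℝ) < ν := by positivity
  set cD := B * m1r * cC ^ p with hcD
  have hcD0 : 0 ≤ cD := by positivity
  have hstep7 : ∀ v ∈ Icc L t, cD * v ^ ηD * (v - L) ^ (ν+1) / (ν+1) ≤ F v + F' v := by
    intro v hv
    have hsubv : Icc L v ⊆ Icc L t := Icc_subset_Icc le_rfl hv.2
    have hkey := key_int (f := fun s => F s + F' s) (f' := fun s => F' s + F'' s)
      hL1 hv.1 hcD0 hηD0 hν0.le
      (fun x hx => ((hF x (hsub (hsubv hx))).mono (subset_trans hsubv hsub)).add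
        ((hF' x (hsub (hsubv hx))).mono (subset_trans hsubv hsub)))
      (by
        have h1 : (0:ℝ) ≤ F L := hFpos L (hsub ⟨le_rfl, hLt⟩)
        have h2 : (0:ℝ) ≤ F' L := hF'pos L (hsub ⟨le_rfl, hLt⟩)
        positivity)
      (by
        intro x hx
        have hx1 : (1:ℝ) ≤ x := le_trans hL1 hx.1
        have hx0 : (0:ℝ) < x := by linarith
        have hxL : (0:ℝ) ≤ x - L := by linarith [hx.1]
        have hGx := hstep5 x (hsubv hx)
        have hGabs : |G x| = G x := abs_of_nonneg (hGpos x (hsub (hsubv hx)))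
        have hexpand : (cC * x ^ ηA * (x - L) ^ (β*q+2)) ^ p
            = cC ^ p * x ^ (ηA*p) * (x - L) ^ ((β*q+2)*p) := by
          rw [Real.mul_rpow (mul_nonneg hcC0 (Real.rpow_nonneg hx0.le _))
              (Real.rpow_nonneg hxL _),
            Real.mul_rpow hcC0 (Real.rpow_nonneg hx0.le _),
            ← Real.rpow_mul hx0.le, ← Real.rpow_mul hxL]
        have h3 : cD * x ^ ηD * (x - L) ^ ν
            ≤ B * (R + x) ^ (-r) * |G x| ^ p := by
          calc cD * x ^ ηD * (x - L) ^ ν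
              = B * (m1r * x ^ (-r)) * ((cC * x ^ ηA * (x - L) ^ (β*q+2)) ^ p) := by
                rw [hexpand, hcD, hηD, Real.rpow_add hx0, hν]; ring
            _ ≤ B * ((R+x) ^ (-r)) * ((G x) ^ p) := by
                apply mul_le_mul
                · exact mul_le_mul_of_nonneg_left (coeff_bound hR hx1) hB.le
                · exact Real.rpow_le_rpow (by positivity) hGx hp0.le
                · positivity
                · positivity
            _ = B * (R+x) ^ (-r) * |G x| ^ p := by rw [hGabs]
        have h4 := hFineq x (hsub (hsubv hx))
        calc cD * x ^ ηD * (x - L) ^ ν ≤ B * (R + x) ^ (-r) * |G x| ^ p := h3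
          _ ≤ F'' x + F' x := h4
          _ = F' x + F'' x := by ring)
    exact hkey
  -- Step 8 : exponential absorption
  have htηD : (0:ℝ) < t ^ ηD := Real.rpow_pos_of_pos ht0 _
  have hκ0 : (0:ℝ) ≤ cD * t ^ ηD / (ν+1) := by positivity
  have hstep8 := key_exp (κ := cD * t ^ ηD / (ν+1)) (m := ν+1) hLt hκ0 (by linarith)
    (fun x hx => (hF x (hsub hx)).mono hsub)
    (hFpos L (hsub ⟨le_rfl, hLt⟩))
    (by
      intro x hx
      have hx1 : (1:ℝ) ≤ x := le_trans hL1 hx.1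
      have hx0 : (0:ℝ) < x := by linarith
      have hxL : (0:ℝ) ≤ x - L := by linarith [hx.1]
      have h1 := hstep7 x hx
      have h2 : t ^ ηD ≤ x ^ ηD := Real.rpow_le_rpow_of_nonpos hx0 hx.2 hηD0
      have h3 : cD * t ^ ηD / (ν+1) * (x - L) ^ (ν+1)
          ≤ cD * x ^ ηD * (x - L) ^ (ν+1) / (ν+1) := by
        have h4 : (0:ℝ) ≤ (x - L) ^ (ν+1) := Real.rpow_nonneg hxL _
        have h5 : cD * t ^ ηD ≤ cD * x ^ ηD := mul_le_mul_of_nonneg_left h2 hcD0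
        have h6 : cD * t ^ ηD * (x-L) ^ (ν+1) ≤ cD * x ^ ηD * (x-L) ^ (ν+1) :=
          mul_le_mul_of_nonneg_right h5 h4
        calc cD * t ^ ηD / (ν+1) * (x - L) ^ (ν+1)
            = cD * t ^ ηD * (x-L) ^ (ν+1) / (ν+1) := by ring
          _ ≤ cD * x ^ ηD * (x-L) ^ (ν+1) / (ν+1) := by gcongr

      exact le_trans h3 h1)
  -- Step 9/10 : final algebra
  have hν2 : p*q*β+2*p+2 = ν+1+1 := by rw [hν]; ring
  have hexp_t : -(p*q*θ + ρ*p + r + 1) = ηD + (-1) := by rw [hηD, hηA]; ring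
  rw [hν2, hexp_t, Real.rpow_add ht0, Real.rpow_neg_one]
  have hcD_eq : cD = B * m1r * (2 ^ (-μ)*B'*m1ρ) ^ p * M ^ (p*q)
      / ((β*q+1)*(β*q+2)) ^ p := by
    rw [hcD, hcC, hcA]
    rw [show B' * m1ρ * M ^ q * 2 ^ (-μ) = 2 ^ (-μ)*B'*m1ρ * M ^ q by ring]
    rw [Real.div_rpow (by positivity) (by positivity),
      Real.mul_rpow (by positivity) (Real.rpow_nonneg hM q),
      ← Real.rpow_mul hM, show q*p = p*q by ring]
    ring
  have htL0 : (0:ℝ) ≤ t - L := by linarith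
  have hD2 : (t-L)+(ν+1+1) ≤ 2*t*(ν+2) := by nlinarith
  have hDpos : (0:ℝ) < (t-L)+(ν+1+1) := by linarith
  calc B * m1r * (2 ^ (-μ)*B'*m1ρ) ^ p / 2 * M ^ (p*q)
        / (((β*q+1)*(β*q+2)) ^ p * ((ν+1) * (ν+2)))
        * (t ^ ηD * t⁻¹) * (t-L) ^ (ν+1+1)
      = cD * t ^ ηD / (ν+1) / (2*t*(ν+2)) * (t-L) ^ (ν+1+1) := by
        rw [hcD_eq]
        have h1 : ((β*q+1)*(β*q+2)) ^ p ≠ 0 := by positivity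
        field_simp
    _ ≤ cD * t ^ ηD / (ν+1) / ((t-L)+(ν+1+1)) * (t-L) ^ (ν+1+1) := by
        gcongr
    _ = cD * t ^ ηD / (ν+1) * (t-L) ^ (ν+1+1) / ((t-L)+(ν+1+1)) := by ring
    _ ≤ F t := hstep8

set_option maxHeartbeats 1000000 in
private lemma coef_step {p q K₀ b₁ b₂ βn mn mn1 Λn Λ₀ Pn : ℝ}
    (hp : 1 < p) (hq : 1 < q)
    (hK₀ : 0 < K₀) (hb₁ : 0 < b₁) (hb₂def : b₂ = b₁*p+2)
    (hβn : 0 ≤ βn) (hPn1 : 1 ≤ Pn)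
    (hβub : βn*q + 2 ≤ b₁*Pn)
    (hE0 : Real.exp Λ₀ = max 1 (b₁ ^ (2*p) * b₂ ^ (2:ℝ) / K₀))
    (hEn : Real.exp Λn = Pn ^ (2*p+2:ℝ))
    (hm1 : mn1 = p*q*mn - Λn - Λ₀) :
    Real.exp mn1 ≤ K₀ * (Real.exp mn) ^ (p*q)
      / (((βn*q+1)*(βn*q+2)) ^ p * (((βn*q+2)*p+1) * ((βn*q+2)*p+2))) := by
  have hp0 : (0:ℝ) < p := by linarith
  have hq0 : (0:ℝ) < q := by linarith
  have hPn0 : (0:ℝ) < Pn := by linarith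
  have hb₂0 : 0 < b₂ := by rw [hb₂def]; nlinarith
  have hβq1 : (0:ℝ) < βn*q+1 := by nlinarith
  have hβq2 : (0:ℝ) < βn*q+2 := by nlinarith
  have hf3 : (0:ℝ) < (βn*q+2)*p+1 := by nlinarith
  have hf4 : (0:ℝ) < (βn*q+2)*p+2 := by nlinarith
  have hX1 : βn*q+1 ≤ b₁ * Pn := by linarith
  have hY2 : (βn*q+2)*p+2 ≤ b₂ * Pn := by
    rw [hb₂def]
    nlinarith [mul_le_mul_of_nonneg_right hβub hp0.le]
  have hY1 : (βn*q+2)*p+1 ≤ b₂ * Pn := by linarith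
  have hDn0 : 0 < ((βn*q+1)*(βn*q+2)) ^ p * (((βn*q+2)*p+1) * ((βn*q+2)*p+2)) := by
    have := Real.rpow_pos_of_pos (mul_pos hβq1 hβq2) p
    positivity
  have hq2 : ((βn*q+1)*(βn*q+2)) ^ p ≤ (b₁ * Pn) ^ (2*p) := by
    have hm1' : (βn*q+1)*(βn*q+2) ≤ (b₁ * Pn) * (b₁ * Pn) :=
      mul_le_mul hX1 hβub hβq2.le (by positivity)
    have hm2 : (b₁ * Pn) * (b₁ * Pn) = (b₁ * Pn) ^ (2:ℝ) := by
      rw [show (2:ℝ) = ((2:ℕ):ℝ) by norm_num, Real.rpow_natCast]; ring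
    calc ((βn*q+1)*(βn*q+2)) ^ p ≤ ((b₁ * Pn) ^ (2:ℝ)) ^ p := by
          rw [← hm2]; exact Real.rpow_le_rpow (by positivity) hm1' hp0.le
      _ = (b₁ * Pn) ^ (2*p) := by rw [← Real.rpow_mul (by positivity)]
  have hq3 : ((βn*q+2)*p+1) * ((βn*q+2)*p+2) ≤ (b₂ * Pn) ^ (2:ℝ) := by
    rw [show (2:ℝ) = ((2:ℕ):ℝ) by norm_num, Real.rpow_natCast]
    calc ((βn*q+2)*p+1) * ((βn*q+2)*p+2) ≤ (b₂ * Pn) * (b₂ * Pn) :=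
          mul_le_mul hY1 hY2 hf4.le (by positivity)
      _ = (b₂ * Pn) ^ (2:ℕ) := by ring
  have hDle : ((βn*q+1)*(βn*q+2)) ^ p * (((βn*q+2)*p+1) * ((βn*q+2)*p+2))
      ≤ b₁ ^ (2*p) * b₂ ^ (2:ℝ) * Pn ^ (2*p+2:ℝ) := by
    calc ((βn*q+1)*(βn*q+2)) ^ p * (((βn*q+2)*p+1) * ((βn*q+2)*p+2))
        ≤ (b₁ * Pn) ^ (2*p) * ((b₂ * Pn) ^ (2:ℝ)) := by
          apply mul_le_mul hq2 hq3 (by positivity) (by positivity)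
      _ = b₁ ^ (2*p) * b₂ ^ (2:ℝ) * Pn ^ (2*p+2:ℝ) := by
          rw [Real.mul_rpow hb₁.le hPn0.le, Real.mul_rpow hb₂0.le hPn0.le,
            Real.rpow_add hPn0]
          ring
  have hDK : ((βn*q+1)*(βn*q+2)) ^ p * (((βn*q+2)*p+1) * ((βn*q+2)*p+2))
      ≤ K₀ * Real.exp (Λn + Λ₀) := by
    rw [Real.exp_add, hEn, hE0]
    have h4 : b₁ ^ (2*p) * b₂ ^ (2:ℝ) ≤ K₀ * max 1 (b₁ ^ (2*p) * b₂ ^ (2:ℝ) / K₀) := by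
      have h5 := le_max_right (1:ℝ) (b₁ ^ (2*p) * b₂ ^ (2:ℝ) / K₀)
      have h6 := mul_le_mul_of_nonneg_left h5 hK₀.le
      calc b₁ ^ (2*p) * b₂ ^ (2:ℝ)
          = K₀ * (b₁ ^ (2*p) * b₂ ^ (2:ℝ) / K₀) := by field_simp
        _ ≤ K₀ * max 1 (b₁ ^ (2*p) * b₂ ^ (2:ℝ) / K₀) := h6
    calc ((βn*q+1)*(βn*q+2)) ^ p * (((βn*q+2)*p+1) * ((βn*q+2)*p+2))
        ≤ b₁ ^ (2*p) * b₂ ^ (2:ℝ) * Pn ^ (2*p+2:ℝ) := hDle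
      _ ≤ (K₀ * max 1 (b₁ ^ (2*p) * b₂ ^ (2:ℝ) / K₀)) * Pn ^ (2*p+2:ℝ) :=
          mul_le_mul_of_nonneg_right h4 (by positivity)
      _ = K₀ * (Pn ^ (2*p+2:ℝ) * max 1 (b₁ ^ (2*p) * b₂ ^ (2:ℝ) / K₀)) := by ring
  rw [hm1]
  have hsp : Real.exp (p*q*mn - Λn - Λ₀)
      = (Real.exp mn) ^ (p*q) * (Real.exp (Λn + Λ₀))⁻¹ := by
    rw [← Real.exp_mul, ← Real.exp_neg, ← Real.exp_add]; congr 1; ring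
  rw [hsp, le_div_iff₀ hDn0]
  have hE : (0:ℝ) < Real.exp (Λn + Λ₀) := Real.exp_pos _
  have ha' : (0:ℝ) ≤ (Real.exp mn) ^ (p*q) * (Real.exp (Λn + Λ₀))⁻¹ := by positivity
  calc (Real.exp mn) ^ (p*q) * (Real.exp (Λn + Λ₀))⁻¹
        * (((βn*q+1)*(βn*q+2)) ^ p * (((βn*q+2)*p+1) * ((βn*q+2)*p+2)))
      ≤ (Real.exp mn) ^ (p*q) * (Real.exp (Λn + Λ₀))⁻¹ * (K₀ * Real.exp (Λn + Λ₀)) :=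
        mul_le_mul_of_nonneg_left hDK ha'
    _ = K₀ * (Real.exp mn) ^ (p*q) := by field_simp



set_option maxHeartbeats 2000000 in
/-- Comparison argument, scale-invariant damping `b(t) = μ/(1+t)`, `μ > 0`,
with a lower bound on the first component `F(t) ≥ A t^a` on `[T₀,T)`.  If
`a(pq−1) + 2p + 1 > ρp + r`, there are `A₀ > 0` and `C > 0` (independent of `A` and of the
pair `(F,G)`) such that whenever `A ∈ (0,A₀]`, no such pair can live on `[0,T)` beyond
`C A^{−1/γ}`, `γ = a + (2p+1−(ρp+r))/(pq−1)`.  `C²([0,T))` is encoded through `F, G` together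
with their first and second derivative functions (one-sided at `0`), the second derivatives
being continuous. -/
theorem comparison_ODI_scale_invariant_first_component
    (μ B B' R p q r ρ a T₀ : ℝ)
    (hμ : 0 < μ) (hB : 0 < B) (hB' : 0 < B') (hR : 0 < R)
    (hp : 1 < p) (hq : 1 < q) (hT₀ : 0 < T₀)
    (ha : ρ * p + r < a * (p * q - 1) + 2 * p + 1) :
    ∃ A₀ > 0, ∃ C > 0,
      ∀ (T : ℝ) (F F' F'' G G' G'' : ℝ → ℝ) (A : ℝ),
        (∀ t ∈ Set.Ico (0 : ℝ) T, HasDerivWithinAt F (F' t) (Set.Ico 0 T) t) →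
        (∀ t ∈ Set.Ico (0 : ℝ) T, HasDerivWithinAt F' (F'' t) (Set.Ico 0 T) t) →
        ContinuousOn F'' (Set.Ico 0 T) →
        (∀ t ∈ Set.Ico (0 : ℝ) T, HasDerivWithinAt G (G' t) (Set.Ico 0 T) t) →
        (∀ t ∈ Set.Ico (0 : ℝ) T, HasDerivWithinAt G' (G'' t) (Set.Ico 0 T) t) →
        ContinuousOn G'' (Set.Ico 0 T) →
        (∀ t ∈ Set.Ico (0 : ℝ) T, B * (R + t) ^ (-r) * |G t| ^ p ≤ F'' t + F' t) →
        (∀ t ∈ Set.Ico (0 : ℝ) T,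
          B' * (R + t) ^ (-ρ) * |F t| ^ q ≤ G'' t + μ / (1 + t) * G' t) →
        0 ≤ F 0 → 0 ≤ F' 0 → 0 ≤ G 0 → 0 ≤ G' 0 →
        0 < A → A ≤ A₀ →
        (∀ t ∈ Set.Ico T₀ T, A * t ^ a ≤ F t) →
        T ≤ C * A ^ (-(1 / (a + (2 * p + 1 - (ρ * p + r)) / (p * q - 1)))) := by
  have hpq : (1:ℝ) < p*q := by nlinarith
  have hpq0 : (0:ℝ) < p*q := by linarith
  have hpq1 : (0:ℝ) < p*q - 1 := by linarith
  have hp0 : (0:ℝ) < p := by linarith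
  have hq0 : (0:ℝ) < q := by linarith
  obtain ⟨γ, hγdef⟩ : ∃ x : ℝ, x = a + (2 * p + 1 - (ρ * p + r)) / (p * q - 1) := ⟨_, rfl⟩
  have hγ0 : 0 < γ := by
    have h3 : γ * (p*q-1) = a*(p*q-1) + (2*p+1-(ρ*p+r)) := by
      rw [hγdef]; field_simp
    have h4 : 0 < γ * (p*q-1) := by rw [h3]; linarith
    have h5 := div_pos h4 hpq1
    rwa [mul_div_cancel_right₀ _ hpq1.ne'] at h5
  obtain ⟨L, hLdef⟩ : ∃ x : ℝ, x = max T₀ 1 := ⟨_, rfl⟩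
  have hL1 : (1:ℝ) ≤ L := by rw [hLdef]; exact le_max_right _ _
  have hLT₀ : T₀ ≤ L := by rw [hLdef]; exact le_max_left _ _
  have hL0 : (0:ℝ) < L := by linarith
  obtain ⟨θ₀, hθ₀def⟩ : ∃ x : ℝ, x = |a| + (μ + |ρ| + |r|)/q + (|ρ| * p + |r| + 1)/(p*q-1) := ⟨_, rfl⟩
  have hd1 : 0 ≤ (μ + |ρ| + |r|)/q := div_nonneg (by positivity) hq0.le
  have hd2 : 0 ≤ (|ρ| * p + |r| + 1)/(p*q-1) := div_nonneg (by positivity) hpq1.le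
  have hθ₀a : 0 ≤ a + θ₀ := by
    rw [hθ₀def]; linarith [neg_abs_le a]
  have hθ₀q : μ + |ρ| + |r| ≤ q * θ₀ := by
    have key1 : μ + |ρ| + |r| = q * ((μ+|ρ|+|r|)/q) := by field_simp
    rw [key1]
    exact mul_le_mul_of_nonneg_left
      (by rw [hθ₀def]; linarith [abs_nonneg a]) hq0.le
  have hθ₀ρ : |ρ| * p + |r| + 1 ≤ (p*q-1) * θ₀ := by
    have key1 : |ρ| * p + |r| + 1 = (p*q-1) * ((|ρ| * p+|r|+1)/(p*q-1)) := by field_simp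
    rw [key1]
    exact mul_le_mul_of_nonneg_left
      (by rw [hθ₀def]; linarith [abs_nonneg a]) hpq1.le
  obtain ⟨cθ, hcθdef⟩ : ∃ x : ℝ, x = (ρ*p + r + 1)/(p*q-1) := ⟨_, rfl⟩
  obtain ⟨cβ, hcβdef⟩ : ∃ x : ℝ, x = (2*p+2)/(p*q-1) := ⟨_, rfl⟩
  have hcβ0 : 0 < cβ := by rw [hcβdef]; exact div_pos (by linarith) hpq1
  obtain ⟨θs, hθsdef⟩ : ∃ x : ℝ, x = θ₀ + cθ := ⟨_, rfl⟩
  obtain ⟨βs, hβsdef⟩ : ∃ x : ℝ, x = a + θ₀ + cβ := ⟨_, rfl⟩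
  have hβs0 : 0 < βs := by rw [hβsdef]; linarith
  have hγsb : βs - θs = γ := by
    rw [hβsdef, hθsdef, hγdef, hcβdef, hcθdef]; field_simp; ring
  obtain ⟨θf, hθfdef⟩ : ∃ x : ℕ → ℝ, x = fun j => θs * (p*q)^j - cθ := ⟨_, rfl⟩
  obtain ⟨βf, hβfdef⟩ : ∃ x : ℕ → ℝ, x = fun j => βs * (p*q)^j - cβ := ⟨_, rfl⟩
  have hθf0 : θf 0 = θ₀ := by rw [hθfdef]; simp [hθsdef]
  have hβf0 : βf 0 = a + θ₀ := by rw [hβfdef]; simp [hβsdef]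
  have hθfrec : ∀ j : ℕ, θf (j+1) = p*q * θf j + (ρ*p + r + 1) := by
    intro j; rw [hθfdef]; simp only; rw [pow_succ, hcθdef]; field_simp; ring
  have hβfrec : ∀ j : ℕ, βf (j+1) = p*q * βf j + (2*p + 2) := by
    intro j; rw [hβfdef]; simp only; rw [pow_succ, hcβdef]; field_simp; ring
  have hPj1 : ∀ j : ℕ, (1:ℝ) ≤ (p*q)^j := fun j => one_le_pow₀ hpq.le
  have hθfmono : ∀ j, θ₀ ≤ θf j := by
    intro j; induction j with
    | zero => rw [hθf0]
    | succ n ih =>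
        rw [hθfrec n]
        have h1 : (p*q-1)*θ₀ ≤ (p*q-1)*θf n := mul_le_mul_of_nonneg_left ih hpq1.le
        have h2 : -|ρ| * p ≤ ρ*p := mul_le_mul_of_nonneg_right (neg_abs_le ρ) hp0.le
        nlinarith [neg_abs_le r, hθ₀ρ]
  have hβfmono : ∀ j, a + θ₀ ≤ βf j := by
    intro j; induction j with
    | zero => rw [hβf0]
    | succ n ih =>
        rw [hβfrec n]
        have h1 : 0 ≤ (p*q-1)*βf n := mul_nonneg hpq1.le (by linarith)
        nlinarith
  -- constants for the coefficient recursion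
  have hm1ρ0 : 0 < min 1 ((1+R) ^ (-ρ)) := lt_min one_pos (Real.rpow_pos_of_pos (by linarith) _)
  have hm1r0 : 0 < min 1 ((1+R) ^ (-r)) := lt_min one_pos (Real.rpow_pos_of_pos (by linarith) _)
  have h2μ0 : (0:ℝ) < 2 ^ (-μ) := Real.rpow_pos_of_pos (by norm_num) _
  obtain ⟨K₀, hK₀def⟩ : ∃ x : ℝ, x = B * min 1 ((1+R) ^ (-r)) * (2 ^ (-μ) * B' * min 1 ((1+R) ^ (-ρ))) ^ p / 2 := ⟨_, rfl⟩
  have hK₀0 : 0 < K₀ := by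
    rw [hK₀def]
    have := Real.rpow_pos_of_pos (mul_pos (mul_pos h2μ0 hB') hm1ρ0) p
    positivity
  obtain ⟨b₁, hb₁def⟩ : ∃ x : ℝ, x = βs*q + 2 := ⟨_, rfl⟩
  obtain ⟨b₂, hb₂def⟩ : ∃ x : ℝ, x = b₁*p + 2 := ⟨_, rfl⟩
  have hb₁0 : 0 < b₁ := by rw [hb₁def]; nlinarith
  have hb₂0 : 0 < b₂ := by rw [hb₂def]; nlinarith
  obtain ⟨Λ, hΛdef⟩ : ∃ x : ℝ, x = (2*p+2) * Real.log (p*q) := ⟨_, rfl⟩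
  have hΛ0 : 0 ≤ Λ := by rw [hΛdef]; exact mul_nonneg (by linarith) (Real.log_nonneg hpq.le)
  obtain ⟨Λ₀, hΛ₀def⟩ : ∃ x : ℝ, x = Real.log (max 1 (b₁ ^ (2*p) * b₂ ^ (2:ℝ) / K₀)) := ⟨_, rfl⟩
  have hΛ₀0 : 0 ≤ Λ₀ := by rw [hΛ₀def]; exact Real.log_nonneg (le_max_left _ _)
  obtain ⟨S, hSdef⟩ : ∃ x : ℝ, x = Λ/(p*q-1)^2 + Λ₀/(p*q-1) := ⟨_, rfl⟩
  have hS0 : 0 ≤ S := by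
    rw [hSdef]
    have : (0:ℝ) < (p*q-1)^2 := by positivity
    positivity
  obtain ⟨κ₁, hκ₁def⟩ : ∃ x : ℝ, x = S + βs * Real.log 2 := ⟨_, rfl⟩
  obtain ⟨C, hCdef⟩ : ∃ x : ℝ, x = Real.exp (κ₁/γ) := ⟨_, rfl⟩
  have hC0 : 0 < C := by rw [hCdef]; exact Real.exp_pos _
  obtain ⟨A₀, hA₀def⟩ : ∃ x : ℝ, x = min 1 ((C/(2*L)) ^ γ) := ⟨_, rfl⟩
  have hA₀0 : 0 < A₀ := by
    rw [hA₀def]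
    exact lt_min one_pos (Real.rpow_pos_of_pos (div_pos hC0 (by linarith)) _)
  refine ⟨A₀, hA₀0, C, hC0, ?_⟩
  intro T F F' F'' G G' G'' A hF hF' _ hG hG' _ hFineq hGineq hF0 hF'0 hG0 hG'0 hA hAA₀ hlow
  -- nonnegativity of F, F', G, G' on [0,T)
  have hRHSF : ∀ s ∈ Ico (0:ℝ) T, 0 ≤ F'' s + F' s := by
    intro s hs
    refine le_trans ?_ (hFineq s hs)
    have h1 : (0:ℝ) < R + s := by linarith [hs.1]
    positivity
  have hRHSG : ∀ s ∈ Ico (0:ℝ) T, 0 ≤ G'' s + μ/(1+s) * G' s := by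
    intro s hs
    refine le_trans ?_ (hGineq s hs)
    have h1 : (0:ℝ) < R + s := by linarith [hs.1]
    positivity
  have hF'pos : ∀ s ∈ Ico (0:ℝ) T, 0 ≤ F' s := by
    intro s hs
    have hsub : Icc (0:ℝ) s ⊆ Ico (0:ℝ) T := fun x hx => ⟨hx.1, lt_of_le_of_lt hx.2 hs.2⟩
    have hd1 : ∀ x ∈ Icc (0:ℝ) s, HasDerivWithinAt (fun _ : ℝ => (0:ℝ))
        ((fun _ : ℝ => (0:ℝ)) x) (Icc (0:ℝ) s) x := fun x _ => hasDerivWithinAt_const _ _ 0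
    have hd2 : ∀ x ∈ Icc (0:ℝ) s, HasDerivWithinAt (fun u => Real.exp u * F' u)
        ((fun u => Real.exp u * F' u + Real.exp u * F'' u) x) (Icc (0:ℝ) s) x :=
      fun x hx => ((Real.hasDerivAt_exp x).hasDerivWithinAt).mul ((hF' x (hsub hx)).mono hsub)
    have hd3 : ∀ x ∈ Icc (0:ℝ) s, (fun _ : ℝ => (0:ℝ)) x
        ≤ (fun u => Real.exp u * F' u + Real.exp u * F'' u) x := by
      intro x hx
      have h := hRHSF x (hsub hx)
      have h2 : 0 ≤ Real.exp x * (F'' x + F' x) := mul_nonneg (Real.exp_pos x).le h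
      simp only
      calc (0:ℝ) ≤ Real.exp x * (F'' x + F' x) := h2
        _ = Real.exp x * F' x + Real.exp x * F'' x := by ring
    have hcmp := mono_cmp hs.1 hd1 hd2 hd3
    simp only [Real.exp_zero, one_mul, sub_zero, sub_self] at hcmp
    have h3 : 0 ≤ Real.exp s * F' s := by linarith
    exact (mul_nonneg_iff_of_pos_left (Real.exp_pos s)).mp h3
  have hFpos : ∀ s ∈ Ico (0:ℝ) T, 0 ≤ F s := by
    intro s hs
    have hsub : Icc (0:ℝ) s ⊆ Ico (0:ℝ) T := fun x hx => ⟨hx.1, lt_of_le_of_lt hx.2 hs.2⟩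
    have hd1 : ∀ x ∈ Icc (0:ℝ) s, HasDerivWithinAt (fun _ : ℝ => (0:ℝ))
        ((fun _ : ℝ => (0:ℝ)) x) (Icc (0:ℝ) s) x := fun x _ => hasDerivWithinAt_const _ _ 0
    have hcmp := mono_cmp hs.1 hd1 (fun x hx => (hF x (hsub hx)).mono hsub)
      (fun x hx => hF'pos x (hsub hx))
    simp only [sub_zero, sub_self] at hcmp
    linarith [hF0, hcmp]
  have hWd : ∀ s ∈ Ico (0:ℝ) T, ∀ (E : Set ℝ), E ⊆ Ico (0:ℝ) T →
      HasDerivWithinAt (fun u => (1+u) ^ μ * G' u)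
        ((1+s) ^ μ * (G'' s + μ/(1+s) * G' s)) E s := by
    intro x hx E hE
    have h1x : (0:ℝ) < 1 + x := by linarith [hx.1]
    have hgx : HasDerivWithinAt G' (G'' x) E x := (hG' x hx).mono hE
    have hw : HasDerivAt (fun s : ℝ => (1+s) ^ μ) (μ * (1+x) ^ (μ-1)) x := by
      have h0 : HasDerivAt (fun s : ℝ => 1 + s) 1 x := (hasDerivAt_id x).const_add 1
      have h1 := (Real.hasDerivAt_rpow_const (x := 1+x) (p := μ) (Or.inl h1x.ne')).comp x h0
      rw [mul_one] at h1; exact h1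
    have h2 := (hw.hasDerivWithinAt).mul hgx
    have heq : μ * (1+x) ^ (μ-1) * G' x + (1+x) ^ μ * G'' x
        = (1+x) ^ μ * (G'' x + μ/(1+x) * G' x) := by
      rw [show μ - 1 = μ + (-1) by ring, Real.rpow_add h1x, Real.rpow_neg_one]
      field_simp
      ring
    rwa [heq] at h2
  have hG'pos : ∀ s ∈ Ico (0:ℝ) T, 0 ≤ G' s := by
    intro s hs
    have hsub : Icc (0:ℝ) s ⊆ Ico (0:ℝ) T := fun x hx => ⟨hx.1, lt_of_le_of_lt hx.2 hs.2⟩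
    have hd1 : ∀ x ∈ Icc (0:ℝ) s, HasDerivWithinAt (fun _ : ℝ => (0:ℝ))
        ((fun _ : ℝ => (0:ℝ)) x) (Icc (0:ℝ) s) x := fun x _ => hasDerivWithinAt_const _ _ 0
    have hd2 : ∀ x ∈ Icc (0:ℝ) s, HasDerivWithinAt (fun u => (1+u) ^ μ * G' u)
        ((fun u => (1+u) ^ μ * (G'' u + μ/(1+u) * G' u)) x) (Icc (0:ℝ) s) x :=
      fun x hx => hWd x (hsub hx) _ hsub
    have hd3 : ∀ x ∈ Icc (0:ℝ) s, (fun _ : ℝ => (0:ℝ)) x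
        ≤ (fun u => (1+u) ^ μ * (G'' u + μ/(1+u) * G' u)) x :=
      fun x hx => mul_nonneg (Real.rpow_nonneg (by linarith [hx.1] : (0:ℝ) ≤ 1 + x) μ)
        (hRHSG x (hsub hx))
    have hcmp := mono_cmp hs.1 hd1 hd2 hd3
    simp only [sub_zero, sub_self, add_zero, Real.one_rpow, one_mul] at hcmp
    have h1s : (0:ℝ) < (1+s) ^ μ := Real.rpow_pos_of_pos (by linarith [hs.1]) μ
    have h3 : 0 ≤ (1+s) ^ μ * G' s := by linarith
    exact (mul_nonneg_iff_of_pos_left h1s).mp h3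
  have hGpos : ∀ s ∈ Ico (0:ℝ) T, 0 ≤ G s := by
    intro s hs
    have hsub : Icc (0:ℝ) s ⊆ Ico (0:ℝ) T := fun x hx => ⟨hx.1, lt_of_le_of_lt hx.2 hs.2⟩
    have hd1 : ∀ x ∈ Icc (0:ℝ) s, HasDerivWithinAt (fun _ : ℝ => (0:ℝ))
        ((fun _ : ℝ => (0:ℝ)) x) (Icc (0:ℝ) s) x := fun x _ => hasDerivWithinAt_const _ _ 0
    have hcmp := mono_cmp hs.1 hd1 (fun x hx => (hG x (hsub hx)).mono hsub)
      (fun x hx => hG'pos x (hsub hx))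
    simp only [sub_zero, sub_self] at hcmp
    linarith [hG0, hcmp]
  -- the iteration
  obtain ⟨m, hmdef⟩ : ∃ x : ℕ → ℝ, x = fun j : ℕ => (Real.log A - S) * (p*q)^j + Λ * (j:ℝ)/(p*q-1) + S := ⟨_, rfl⟩
  have hmrec : ∀ j : ℕ, m (j+1) = p*q * m j - Λ*j - Λ₀ := by
    intro j
    rw [hmdef]; simp only
    rw [hSdef]
    push_cast
    rw [pow_succ]
    field_simp
    ring
  have hm0 : m 0 = Real.log A := by rw [hmdef]; simp
  have hmain : ∀ j : ℕ, ∀ t ∈ Ico (0:ℝ) T, L ≤ t →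
      Real.exp (m j) * t ^ (-(θf j)) * (t-L) ^ (βf j) ≤ F t := by
    intro j
    induction j with
    | zero =>
      intro t ht hLt
      have ht0 : (0:ℝ) < t := by linarith
      rw [hm0, Real.exp_log hA, hθf0, hβf0]
      have h1 : (t-L) ^ (a+θ₀) ≤ t ^ (a+θ₀) :=
        Real.rpow_le_rpow (by linarith) (by linarith) hθ₀a
      calc A * t ^ (-θ₀) * (t-L) ^ (a+θ₀) ≤ A * t ^ (-θ₀) * t ^ (a+θ₀) := by
            have h2 : 0 ≤ A * t ^ (-θ₀) := mul_nonneg hA.le (Real.rpow_nonneg ht0.le _)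
            exact mul_le_mul_of_nonneg_left h1 h2
        _ = A * t ^ a := by
            rw [mul_assoc, ← Real.rpow_add ht0, show -θ₀ + (a+θ₀) = a by ring]
        _ ≤ F t := hlow t ⟨le_trans hLT₀ hLt, ht.2⟩
    | succ n ih =>
      have hMn : (0:ℝ) ≤ Real.exp (m n) := (Real.exp_pos _).le
      have hβn : (0:ℝ) ≤ βf n := le_trans hθ₀a (hβfmono n)
      have hθn : μ + |ρ| + |r| ≤ q * θf n :=
        le_trans hθ₀q (mul_le_mul_of_nonneg_left (hθfmono n) hq0.le)
      have h2 := loop' μ B B' R p q r ρ hμ hB hB' hR hp hq hL1 hF hF' hG hG'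
        hFineq hGineq hFpos hF'pos hGpos hG'pos hMn hβn hθn ih
      intro t ht hLt
      have h3 := h2 t ht hLt
      rw [← hK₀def] at h3
      have ht0 : (0:ℝ) < t := by linarith
      -- exponent identifications
      have e1 : -(p*q*(θf n) + ρ*p + r + 1) = -(θf (n+1)) := by rw [hθfrec n]; ring
      have e2 : p*q*(βf n) + 2*p + 2 = βf (n+1) := by rw [hβfrec n]; ring
      rw [e1, e2] at h3
      -- the coefficient inequality
      have hPn1 : (1:ℝ) ≤ (p*q)^n := hPj1 n
      have hβfub : βf n ≤ βs * (p*q)^n := by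
        rw [hβfdef]; simp only; linarith [hcβ0]
      have hβub : βf n*q+2 ≤ b₁ * (p*q)^n := by
        rw [hb₁def]
        have h1 := mul_le_mul_of_nonneg_right hβfub hq0.le
        have h2 := mul_le_mul_of_nonneg_right hPn1 (by norm_num : (0:ℝ) ≤ 2)
        linarith [h1, h2]
      have hEn : Real.exp (Λ*(n:ℝ)) = ((p*q)^n) ^ (2*p+2:ℝ) := by
        rw [hΛdef, show (2*p+2)*Real.log (p*q)*(n:ℝ) = Real.log (p*q) * ((n:ℝ)*(2*p+2)) by
          ring, Real.exp_mul, Real.exp_log hpq0, Real.rpow_mul hpq0.le, Real.rpow_natCast]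
      have hE0 : Real.exp Λ₀ = max 1 (b₁ ^ (2*p) * b₂ ^ (2:ℝ) / K₀) := by
        rw [hΛ₀def]
        exact Real.exp_log (lt_of_lt_of_le one_pos (le_max_left _ _))
      have hcoef := coef_step hp hq hK₀0 hb₁0 hb₂def hβn hPn1 hβub hE0 hEn (hmrec n)
      calc Real.exp (m (n+1)) * t ^ (-(θf (n+1))) * (t-L) ^ (βf (n+1))
          ≤ K₀ * (Real.exp (m n)) ^ (p*q)
              / (((βf n*q+1)*(βf n*q+2)) ^ p * (((βf n*q+2)*p+1) * ((βf n*q+2)*p+2)))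
              * t ^ (-(θf (n+1))) * (t-L) ^ (βf (n+1)) := by
            have h5 : (0:ℝ) ≤ t ^ (-(θf (n+1))) := Real.rpow_nonneg ht0.le _
            have h6 : (0:ℝ) ≤ (t-L) ^ (βf (n+1)) := Real.rpow_nonneg (by linarith) _
            exact mul_le_mul_of_nonneg_right (mul_le_mul_of_nonneg_right hcoef h5) h6
        _ ≤ F t := h3
  -- final blow-up argument
  have hAbound : ∀ t ∈ Ico (0:ℝ) T, 2*L ≤ t → A * t ^ γ ≤ Real.exp κ₁ := by
    intro t ht h2L
    by_contra hcon
    push_neg at hcon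
    have ht0 : (0:ℝ) < t := by linarith
    have ht1 : (1:ℝ) ≤ t := by linarith
    have htL : (0:ℝ) < t - L := by linarith
    have hLt : L ≤ t := by linarith
    have hlogt0 : 0 ≤ Real.log t := Real.log_nonneg ht1
    have hlogtL : Real.log (t-L) ≤ Real.log t := Real.log_le_log htL (by linarith)
    have hX0 : 0 < Real.log A + γ * Real.log t - κ₁ := by
      have h5 : Real.log (Real.exp κ₁) < Real.log (A * t ^ γ) :=
        Real.log_lt_log (Real.exp_pos _) hcon
      rw [Real.log_exp, Real.log_mul hA.ne' (Real.rpow_pos_of_pos ht0 γ).ne',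
        Real.log_rpow ht0] at h5
      linarith only [h5]
    have h7 : Real.log t - Real.log 2 ≤ Real.log (t-L) := by
      have h7' := Real.log_le_log (by positivity : (0:ℝ) < t/2) (by linarith : t/2 ≤ t - L)
      rwa [Real.log_div ht0.ne' (by norm_num)] at h7'
    have hγlt : γ * Real.log t = βs * Real.log t - θs * Real.log t := by
      rw [← hγsb]; ring
    have hXv : Real.log A + γ * Real.log t - κ₁
        ≤ Real.log A - S - θs * Real.log t + βs * Real.log (t-L) := by
      have h8 : βs * (Real.log t - Real.log 2) ≤ βs * Real.log (t-L) :=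
        mul_le_mul_of_nonneg_left h7 hβs0.le
      rw [hκ₁def]
      linarith only [h8, hγlt]
    have hFt0 : 0 < F t := by
      have h9 := hmain 0 t ht hLt
      have h10 : 0 < Real.exp (m 0) * t ^ (-(θf 0)) * (t-L) ^ (βf 0) :=
        mul_pos (mul_pos (Real.exp_pos _) (Real.rpow_pos_of_pos ht0 _))
          (Real.rpow_pos_of_pos htL _)
      linarith only [h9, h10]
    have hkey : ∀ j : ℕ,
        (p*q)^j * (Real.log A - S - θs * Real.log t + βs * Real.log (t-L))
        + (Λ*(j:ℝ)/(p*q-1) + S + cθ * Real.log t - cβ * Real.log (t-L))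
        ≤ Real.log (F t) := by
      intro j
      have h10 := hmain j t ht hLt
      have h11 : Real.exp ((p*q)^j * (Real.log A - S - θs * Real.log t + βs * Real.log (t-L))
          + (Λ*(j:ℝ)/(p*q-1) + S + cθ * Real.log t - cβ * Real.log (t-L)))
          = Real.exp (m j) * t ^ (-(θf j)) * (t-L) ^ (βf j) := by
        rw [Real.rpow_def_of_pos ht0, Real.rpow_def_of_pos htL, ← Real.exp_add,
          ← Real.exp_add]
        congr 1
        rw [hmdef, hθfdef, hβfdef]; simp only; ring
      have h12 : Real.exp ((p*q)^j * (Real.log A - S - θs * Real.log t + βs * Real.log (t-L))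
          + (Λ*(j:ℝ)/(p*q-1) + S + cθ * Real.log t - cβ * Real.log (t-L))) ≤ F t := by
        rw [h11]; exact h10
      have h13 := Real.log_le_log (Real.exp_pos _) h12
      rwa [Real.log_exp] at h13
    have hXvpos : 0 < Real.log A - S - θs * Real.log t + βs * Real.log (t-L) :=
      lt_of_lt_of_le hX0 hXv
    obtain ⟨j, hj⟩ := pow_unbounded_of_one_lt
      ((Real.log (F t) - (S + cθ * Real.log t - cβ * Real.log (t-L)))
        / (Real.log A - S - θs * Real.log t + βs * Real.log (t-L))) hpq
    have h14 := hkey j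
    have h15 : 0 ≤ Λ*(j:ℝ)/(p*q-1) := by positivity
    rw [div_lt_iff₀ hXvpos] at hj
    linarith only [h14, h15, hj]
  have hbound : ∀ t ∈ Ico (0:ℝ) T, 2*L ≤ t → t ≤ C * A ^ (-(1/γ)) := by
    intro t ht h2L
    have ht0 : (0:ℝ) < t := by linarith
    have h16 := hAbound t ht h2L
    have h17 : Real.log A + γ * Real.log t ≤ κ₁ := by
      have h17' := Real.log_le_log (by positivity) h16
      rwa [Real.log_mul hA.ne' (Real.rpow_pos_of_pos ht0 γ).ne', Real.log_rpow ht0,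
        Real.log_exp] at h17'
    have h18 : Real.log t ≤ (κ₁ - Real.log A)/γ := by
      rw [le_div_iff₀ hγ0]; linarith only [h17]
    calc t = Real.exp (Real.log t) := (Real.exp_log ht0).symm
      _ ≤ Real.exp ((κ₁ - Real.log A)/γ) := Real.exp_le_exp.2 h18
      _ = C * A ^ (-(1/γ)) := by
          rw [hCdef, Real.rpow_def_of_pos hA, ← Real.exp_add]
          congr 1
          field_simp
          ring
  have hQ2L : 2*L ≤ C * A ^ (-(1/γ)) := by
    have h19 : A ≤ (C/(2*L)) ^ γ := le_trans hAA₀ (by rw [hA₀def]; exact min_le_right _ _)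
    have hCL0 : (0:ℝ) < C/(2*L) := div_pos hC0 (by linarith)
    have h20 : A ^ (1/γ) ≤ C/(2*L) := by
      have h21 := Real.rpow_le_rpow hA.le h19 (by positivity : (0:ℝ) ≤ 1/γ)
      rwa [← Real.rpow_mul hCL0.le, mul_one_div, div_self hγ0.ne', Real.rpow_one] at h21
    have h22 : 0 < A ^ (1/γ) := Real.rpow_pos_of_pos hA _
    have h23 : 2*L * A ^ (1/γ) ≤ C := by
      have h23' := mul_le_mul_of_nonneg_left h20 (by linarith : (0:ℝ) ≤ 2*L)
      have h24 : 2*L*(C/(2*L)) = C := by field_simp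
      linarith only [h23', h24]
    rw [Real.rpow_neg hA.le, ← div_eq_mul_inv, le_div_iff₀ h22]
    exact h23
  rw [← hγdef]
  by_contra hT
  push_neg at hT
  have htQ : C * A ^ (-(1/γ)) < (C * A ^ (-(1/γ)) + T)/2 := by linarith only [hT]
  have htT : (C * A ^ (-(1/γ)) + T)/2 < T := by linarith only [hT]
  have h2Lt : 2*L ≤ (C * A ^ (-(1/γ)) + T)/2 := by linarith only [hQ2L, htQ]
  have h0t : (0:ℝ) ≤ (C * A ^ (-(1/γ)) + T)/2 := by linarith only [hL0, h2Lt]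
  have hfin := hbound ((C * A ^ (-(1/γ)) + T)/2) ⟨h0t, htT⟩ h2Lt
  linarith only [hfin, htQ]
end

section
/- Let μ > 0 and b(t) = μ/(1+t). Let B, B̃, R > 0, p, q > 1, r, ρ ∈ ℝ, and let F, G ∈ C²([0,T)) satisfy F''(t) + F'(t) ≥ B (R+t)^{−r} |G(t)|^p and G''(t) + b(t) G'(t) ≥ B̃ (R+t)^{−ρ} |F(t)|^q for all t ∈ [0,T), together with F(0), F'(0), G(0), G'(0) ≥ 0. Suppose that for some T₀ > 0, Ã > 0 and α ∈ ℝ one has G(t) ≥ Ã t^α for all t ∈ [T₀,T), and that α(pq−1) + q + 2 > rq + ρ. Then there exist constants Ã₀ = Ã₀(α,T₀,R,p,q,r,ρ,μ,B,B̃) > 0 and C̃ > 0 independent of Ã such that if Ã ∈ (0, Ã₀], then T is finite and T ≤ C̃ Ã^{−1/γ}, where γ = α + (q + 2 − (rq + ρ))/(pq−1). -/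
open Real Set MeasureTheory

namespace CompODI

/-- window weight -/
noncomputable def wfn (R e : ℝ) : ℝ := min ((2:ℝ)⁻¹ ^ e) ((R+1) ^ e)

lemma wfn_pos {R : ℝ} (hR : 0 < R) (e : ℝ) : 0 < wfn R e :=
  lt_min (Real.rpow_pos_of_pos (by norm_num) e) (Real.rpow_pos_of_pos (by linarith) e)

lemma rpow_window {t u c₁ c₂ e : ℝ} (ht : 0 < t) (hc₁ : 0 < c₁)
    (h₁ : c₁ * t ≤ u) (h₂ : u ≤ c₂ * t) :
    min (c₁ ^ e) (c₂ ^ e) * t ^ e ≤ u ^ e := by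
  have hu : 0 < u := lt_of_lt_of_le (mul_pos hc₁ ht) h₁
  have hc₂ : 0 < c₂ := by
    by_contra hc
    push_neg at hc
    nlinarith
  rcases le_or_gt 0 e with he | he
  · calc min (c₁ ^ e) (c₂ ^ e) * t ^ e ≤ c₁ ^ e * t ^ e :=
        mul_le_mul_of_nonneg_right (min_le_left _ _) (Real.rpow_nonneg ht.le e)
    _ = (c₁ * t) ^ e := (Real.mul_rpow hc₁.le ht.le).symm
    _ ≤ u ^ e := Real.rpow_le_rpow (by positivity) h₁ he
  · calc min (c₁ ^ e) (c₂ ^ e) * t ^ e ≤ c₂ ^ e * t ^ e :=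
        mul_le_mul_of_nonneg_right (min_le_right _ _) (Real.rpow_nonneg ht.le e)
    _ = (c₂ * t) ^ e := (Real.mul_rpow hc₂.le ht.le).symm
    _ ≤ u ^ e := Real.rpow_le_rpow_of_nonpos hu h₂ he.le

lemma window_bound {R t s : ℝ} (hR : 0 < R) (ht : 0 < t)
    (h1 : 2⁻¹ * t ≤ s) (h2 : s ≤ (R+1)*t) (e : ℝ) : wfn R e * t ^ e ≤ s ^ e :=
  rpow_window ht (by norm_num) h1 h2

attribute [irreducible] wfn

/-- monotonicity from one-sided derivatives on `Ico 0 T` -/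
lemma le_of_deriv_nonneg {T : ℝ} {f f' : ℝ → ℝ}
    (hf : ∀ t ∈ Ico (0:ℝ) T, HasDerivWithinAt f (f' t) (Ico (0:ℝ) T) t)
    {u v : ℝ} (hu : 0 ≤ u) (huv : u ≤ v) (hv : v < T)
    (hnn : ∀ s ∈ Icc u v, 0 ≤ f' s) : f u ≤ f v := by
  have hsub : Icc u v ⊆ Ico (0:ℝ) T := fun s hs => ⟨hu.trans hs.1, lt_of_le_of_lt hs.2 hv⟩
  have hsub2 : interior (Icc u v) ⊆ Ico (0:ℝ) T := interior_subset.trans hsub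
  have hmono : MonotoneOn f (Icc u v) := by
    apply monotoneOn_of_hasDerivWithinAt_nonneg (f' := f') (convex_Icc u v)
    · exact fun s hs => ((hf s (hsub hs)).continuousWithinAt).mono hsub
    · exact fun x hx => (hf x (hsub2 hx)).mono hsub2
    · exact fun x hx => hnn x (interior_subset hx)
  exact hmono ⟨le_refl u, huv⟩ ⟨huv, le_refl v⟩ huv



variable {T : ℝ}

lemma ODE0 {f f' : ℝ → ℝ}
    (hf : ∀ t ∈ Ico (0:ℝ) T, HasDerivWithinAt f (f' t) (Ico (0:ℝ) T) t)
    {u v m : ℝ} (hu : 0 ≤ u) (huv : u ≤ v) (hv : v < T)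
    (hm : ∀ s ∈ Icc u v, m ≤ f' s) :
    f u + m * (v - u) ≤ f v := by
  have hmono : (fun s => f s - m * s) u ≤ (fun s => f s - m * s) v := by
    apply le_of_deriv_nonneg (f' := fun s => f' s - m) _ hu huv hv
    · intro s hs; simp only [sub_nonneg]; exact hm s hs
    · intro t ht
      have h := (hf t ht).sub (((hasDerivAt_id t).const_mul m).hasDerivWithinAt)
      rw [mul_one] at h
      exact h
  simp only at hmono
  linarith

lemma ODE1 {f' f'' : ℝ → ℝ}
    (hf' : ∀ t ∈ Ico (0:ℝ) T, HasDerivWithinAt f' (f'' t) (Ico (0:ℝ) T) t)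
    {u v m : ℝ} (hu : 0 ≤ u) (huv : u ≤ v) (hv : v < T)
    (hm : ∀ s ∈ Icc u v, m ≤ f'' s + f' s) (hfu : 0 ≤ f' u) :
    (1 - Real.exp (u - v)) * m ≤ f' v := by
  have hmono : Real.exp u * f' u - m * Real.exp u ≤ Real.exp v * f' v - m * Real.exp v := by
    have := le_of_deriv_nonneg
      (f := fun s => Real.exp s * f' s - m * Real.exp s)
      (f' := fun s => (Real.exp s * f' s + Real.exp s * f'' s) - m * Real.exp s)
      (T := T) ?_ hu huv hv ?_
    · exact this
    · intro t ht
      exact ((Real.hasDerivAt_exp t).hasDerivWithinAt.mul (hf' t ht)).sub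
        (((Real.hasDerivAt_exp t).const_mul m).hasDerivWithinAt)
    · intro s hs
      have h1 := hm s hs
      have h2 : (0:ℝ) < Real.exp s := Real.exp_pos s
      nlinarith
  have hev : (0:ℝ) < Real.exp v := Real.exp_pos v
  have heu : (0:ℝ) < Real.exp u := Real.exp_pos u
  have h3 : m * (Real.exp v - Real.exp u) ≤ Real.exp v * f' v := by nlinarith
  have h4 : (1 - Real.exp (u - v)) * m = m * (Real.exp v - Real.exp u) / Real.exp v := by
    rw [Real.exp_sub]
    field_simp
  rw [h4, div_le_iff₀ hev]
  nlinarith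

lemma ODE2 {μ : ℝ} (hμ : 0 < μ) {g' g'' : ℝ → ℝ}
    (hg' : ∀ t ∈ Ico (0:ℝ) T, HasDerivWithinAt g' (g'' t) (Ico (0:ℝ) T) t)
    {u v m : ℝ} (hu : 0 ≤ u) (huv : u ≤ v) (hv : v < T) (hm0 : 0 ≤ m)
    (hm : ∀ s ∈ Icc u v, m ≤ g'' s + μ/(1+s) * g' s) (hgu : 0 ≤ g' u) :
    m * ((1+u) ^ μ * (v-u)) ≤ g' v * ((μ+1) * (1+v) ^ μ) := by
  have h1u : (0:ℝ) < 1 + u := by linarith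
  have h1v : (0:ℝ) < 1 + v := by linarith
  have hμ1 : (0:ℝ) < μ + 1 := by linarith
  have hW : ∀ s : ℝ, 0 ≤ s → HasDerivAt (fun s : ℝ => (1+s) ^ μ) (μ * (1+s) ^ (μ-1)) s := by
    intro s hs
    have h1 : HasDerivAt (fun s : ℝ => 1 + s) 1 s := by
      simpa using (hasDerivAt_id s).const_add 1
    have h2 := (Real.hasDerivAt_rpow_const (x := 1+s) (p := μ) (Or.inl (by linarith))).comp s h1
    simpa [mul_comm, Function.comp_def] using h2
  have hV : ∀ s : ℝ, 0 ≤ s → HasDerivAt (fun s : ℝ => (1+s) ^ (μ+1)) ((μ+1) * (1+s) ^ μ) s := by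
    intro s hs
    have h1 : HasDerivAt (fun s : ℝ => 1 + s) 1 s := by
      simpa using (hasDerivAt_id s).const_add 1
    have h2 := (Real.hasDerivAt_rpow_const (x := 1+s) (p := μ+1)
      (Or.inl (by linarith))).comp s h1
    simpa [mul_comm, Function.comp_def] using h2
  have hmono : (1+u) ^ μ * g' u - m/(μ+1) * (1+u) ^ (μ+1)
      ≤ (1+v) ^ μ * g' v - m/(μ+1) * (1+v) ^ (μ+1) := by
    have := le_of_deriv_nonneg
      (f := fun s => (1+s) ^ μ * g' s - m/(μ+1) * (1+s) ^ (μ+1))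
      (f' := fun s => (μ * (1+s) ^ (μ-1) * g' s + (1+s) ^ μ * g'' s) - m * (1+s) ^ μ)
      (T := T) ?_ hu huv hv ?_
    · exact this
    · intro t ht
      have hd := (((hW t ht.1).hasDerivWithinAt).mul (hg' t ht)).sub
        (((hV t ht.1).hasDerivWithinAt).const_mul (m/(μ+1)))
      have heq : μ * (1+t) ^ (μ-1) * g' t + (1+t) ^ μ * g'' t - m/(μ+1) * ((μ+1) * (1+t) ^ μ)
          = (μ * (1+t) ^ (μ-1) * g' t + (1+t) ^ μ * g'' t) - m * (1+t) ^ μ := by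
        field_simp
      show HasDerivWithinAt _
        (μ * (1 + t) ^ (μ - 1) * g' t + (1 + t) ^ μ * g'' t - m * (1 + t) ^ μ) (Ico 0 T) t
      rw [← heq]
      exact hd
    · intro s hs
      have hs0 : (0:ℝ) ≤ s := hu.trans hs.1
      have h1s : (0:ℝ) < 1 + s := by linarith
      have key := hm s hs
      have hpow : (1+s) ^ (μ-1) = (1+s) ^ μ / (1+s) := Real.rpow_sub_one h1s.ne' μ
      have hWpos : (0:ℝ) < (1+s) ^ μ := Real.rpow_pos_of_pos h1s μ
      have expand : μ * (1+s) ^ (μ-1) * g' s + (1+s) ^ μ * g'' s - m * (1+s) ^ μ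
          = (1+s) ^ μ * ((g'' s + μ/(1+s) * g' s) - m) := by
        rw [hpow]; field_simp; ring
      rw [expand]
      have : (0:ℝ) ≤ (g'' s + μ/(1+s) * g' s) - m := by linarith
      positivity
  have hWu : (0:ℝ) < (1+u) ^ μ := Real.rpow_pos_of_pos h1u μ
  have hWv : (0:ℝ) < (1+v) ^ μ := Real.rpow_pos_of_pos h1v μ
  have hVdiff : (1+u) ^ μ * (v - u) ≤ (1+v) ^ (μ+1) - (1+u) ^ (μ+1) := by
    have e1 : (1+v) ^ (μ+1) = (1+v) ^ μ * (1+v) := by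
      rw [Real.rpow_add_one h1v.ne' μ]
    have e2 : (1+u) ^ (μ+1) = (1+u) ^ μ * (1+u) := by
      rw [Real.rpow_add_one h1u.ne' μ]
    have e3 : (1+u) ^ μ ≤ (1+v) ^ μ := Real.rpow_le_rpow h1u.le (by linarith) hμ.le
    rw [e1, e2]
    nlinarith
  have h5 : 0 ≤ (1+u) ^ μ * g' u := mul_nonneg hWu.le hgu
  have hdm : 0 ≤ m/(μ+1) := by positivity
  have hdivmul : m/(μ+1)*(μ+1) = m := div_mul_cancel₀ m hμ1.ne'
  have h8 : m/(μ+1) * ((1+u) ^ μ * (v-u)) ≤ (1+v) ^ μ * g' v := by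
    nlinarith [mul_le_mul_of_nonneg_left hVdiff hdm]
  have h9 := mul_le_mul_of_nonneg_left h8 hμ1.le
  have h10 : (μ+1) * (m/(μ+1) * ((1+u) ^ μ * (v-u))) = m * ((1+u) ^ μ * (v-u)) := by
    field_simp
  nlinarith [h9, h10]

lemma window_facts {S δ v : ℝ} (hS : 2 ≤ S) (hδ0 : 0 < δ) (hδ1 : δ ≤ 1) (hv : (1+δ)*S ≤ v) :
    S ≤ v/(1+δ) ∧ 2⁻¹ * v ≤ v/(1+δ) ∧ v/(1+δ) ≤ v ∧ δ * v / 2 ≤ v - v/(1+δ) ∧ 2 ≤ v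
      ∧ δ ≤ v - v/(1+δ) := by
  have h1 : (0:ℝ) < 1+δ := by linarith
  have hu : (v/(1+δ)) * (1+δ) = v := div_mul_cancel₀ v h1.ne'
  obtain ⟨u, hudef⟩ : ∃ x:ℝ, x = v/(1+δ) := ⟨_, rfl⟩
  rw [← hudef] at hu ⊢
  have hδS : 0 ≤ δ * S := mul_nonneg hδ0.le (by linarith)
  have hv2 : 2 ≤ v := by nlinarith [hδS]
  have hu0 : 0 < u := by rw [hudef]; exact div_pos (by linarith) h1
  have hSu : S ≤ u := by
    rw [hudef, le_div_iff₀ h1]; nlinarith [hδS]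
  have hu2 : 2 ≤ u := le_trans hS hSu
  have hhalf : 2⁻¹ * v ≤ u := by nlinarith [mul_nonneg (mul_nonneg hδ0.le hu0.le) (by linarith : (0:ℝ) ≤ 1 - δ)]
  refine ⟨hSu, hhalf, by nlinarith [mul_nonneg hδ0.le hu0.le], ?_, hv2, ?_⟩
  · nlinarith [mul_nonneg (mul_nonneg hδ0.le hu0.le) (by linarith : (0:ℝ) ≤ 1 - δ)]
  · nlinarith [mul_nonneg hδ0.le (by linarith : (0:ℝ) ≤ u - 1)]

lemma exp_gap {δ u v : ℝ} (hδ0 : 0 < δ) (hδ1 : δ ≤ 1) (h : δ ≤ v - u) :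
    δ/2 ≤ 1 - Real.exp (u - v) := by
  have hδd : (0:ℝ) < 1+δ := by linarith
  have hh1 : Real.exp (u-v) ≤ Real.exp (-δ) := Real.exp_le_exp.mpr (by linarith)
  have hh2 : Real.exp (-δ) ≤ (1+δ)⁻¹ := by
    rw [Real.exp_neg]
    exact inv_anti₀ hδd (by linarith [Real.add_one_le_exp δ])
  have hh3 : (1+δ)⁻¹ ≤ 1 - δ/2 := by
    rw [← one_div, div_le_iff₀ hδd]
    nlinarith
  linarith

set_option maxHeartbeats 1000000 in
lemma step {T μ B B' R p q r ρ α : ℝ} {F F' F'' G G' G'' : ℝ → ℝ}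
    (hμ : 0 < μ) (hB : 0 < B) (hB' : 0 < B') (hR : 0 < R) (hp : 1 < p) (hq : 1 < q)
    (hFd : ∀ t ∈ Ico (0:ℝ) T, HasDerivWithinAt F (F' t) (Ico (0:ℝ) T) t)
    (hF'd : ∀ t ∈ Ico (0:ℝ) T, HasDerivWithinAt F' (F'' t) (Ico (0:ℝ) T) t)
    (hGd : ∀ t ∈ Ico (0:ℝ) T, HasDerivWithinAt G (G' t) (Ico (0:ℝ) T) t)
    (hG'd : ∀ t ∈ Ico (0:ℝ) T, HasDerivWithinAt G' (G'' t) (Ico (0:ℝ) T) t)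
    (hODI1 : ∀ t ∈ Ico (0:ℝ) T, B * (R + t) ^ (-r) * |G t| ^ p ≤ F'' t + F' t)
    (hODI2 : ∀ t ∈ Ico (0:ℝ) T, B' * (R + t) ^ (-ρ) * |F t| ^ q ≤ G'' t + μ / (1 + t) * G' t)
    (hF'nn : ∀ t ∈ Ico (0:ℝ) T, 0 ≤ F' t) (hFnn : ∀ t ∈ Ico (0:ℝ) T, 0 ≤ F t)
    (hG'nn : ∀ t ∈ Ico (0:ℝ) T, 0 ≤ G' t) (hGnn : ∀ t ∈ Ico (0:ℝ) T, 0 ≤ G t)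
    {S δ a : ℝ} (hS : 2 ≤ S) (hδ0 : 0 < δ) (hδ1 : δ ≤ 1) (ha : 0 < a)
    (hlow : ∀ t ∈ Ico S T, a * t ^ α ≤ G t) :
    ∀ t ∈ Ico ((1+δ)^4 * S) T,
      (δ/2 * (wfn R (q*(α*p - r + 1) + 1 - ρ) *
        (δ/2 * ((2:ℝ)⁻¹ ^ μ / (μ+1)) * ((B' * wfn R (-ρ) * wfn R (q*(α*p - r + 1))) *
          (δ/2 * (wfn R (α*p - r) * (δ/2 * (B * wfn R (-r) * wfn R (α*p) * a ^ p)))) ^ q))))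
        * t ^ (q*(α*p - r + 1) + 2 - ρ) ≤ G t := by
  have hδd : (0:ℝ) < 1 + δ := by linarith
  have hp0 : (0:ℝ) < p := by linarith
  have hq0 : (0:ℝ) < q := by linarith
  obtain ⟨a₁, ha₁def⟩ : ∃ x:ℝ, x = δ/2 * (B * wfn R (-r) * wfn R (α*p) * a ^ p) := ⟨_, rfl⟩
  obtain ⟨a₂, ha₂def⟩ : ∃ x:ℝ, x = δ/2 * (wfn R (α*p - r) * a₁) := ⟨_, rfl⟩
  obtain ⟨a₃, ha₃def⟩ : ∃ x:ℝ, x = δ/2 * ((2:ℝ)⁻¹ ^ μ / (μ+1)) *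
    ((B' * wfn R (-ρ) * wfn R (q*(α*p - r + 1))) * a₂ ^ q) := ⟨_, rfl⟩
  obtain ⟨a₄, ha₄def⟩ : ∃ x:ℝ, x = δ/2 * (wfn R (q*(α*p - r + 1) + 1 - ρ) * a₃) := ⟨_, rfl⟩
  have ha₁ : 0 < a₁ := by
    rw [ha₁def]
    refine mul_pos (by linarith) ?_
    exact mul_pos (mul_pos (mul_pos hB (wfn_pos hR _)) (wfn_pos hR _))
      (Real.rpow_pos_of_pos ha p)
  have ha₂ : 0 < a₂ := by
    rw [ha₂def]; exact mul_pos (by linarith) (mul_pos (wfn_pos hR _) ha₁)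
  have ha₃ : 0 < a₃ := by
    rw [ha₃def]
    refine mul_pos (mul_pos (by linarith)
      (div_pos (Real.rpow_pos_of_pos (by norm_num) μ) (by linarith))) ?_
    exact mul_pos (mul_pos (mul_pos hB' (wfn_pos hR _)) (wfn_pos hR _))
      (Real.rpow_pos_of_pos ha₂ q)
  have ha₄ : 0 < a₄ := by
    rw [ha₄def]; exact mul_pos (by linarith) (mul_pos (wfn_pos hR _) ha₃)
  have hS1 : 2 ≤ (1+δ)*S := by nlinarith [mul_nonneg hδ0.le (by linarith : (0:ℝ) ≤ S)]
  have hS2 : 2 ≤ (1+δ)*((1+δ)*S) := by nlinarith [mul_nonneg hδ0.le (by linarith : (0:ℝ) ≤ (1+δ)*S)]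
  have hS3 : 2 ≤ (1+δ)*((1+δ)*((1+δ)*S)) := by
    nlinarith [mul_nonneg hδ0.le (by linarith : (0:ℝ) ≤ (1+δ)*((1+δ)*S))]
  -- Substep 1 : lower bound for F'
  have h1 : ∀ v, (1+δ)*S ≤ v → v < T → a₁ * v ^ (α*p - r) ≤ F' v := by
    intro v hv hvT
    obtain ⟨hSu, hhalf, huv, hgap, hv2, hgapδ⟩ := window_facts hS hδ0 hδ1 hv
    obtain ⟨u, hudef⟩ : ∃ x:ℝ, x = v/(1+δ) := ⟨_, rfl⟩
    rw [← hudef] at hSu hhalf huv hgap hgapδ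
    have hv0 : (0:ℝ) < v := by linarith
    have hu0 : (0:ℝ) ≤ u := by linarith
    have hm : ∀ s ∈ Icc u v,
        B * (wfn R (-r) * v^(-r)) * (a^p * (wfn R (α*p) * v^(α*p))) ≤ F'' s + F' s := by
      intro s hs
      have hsu : u ≤ s := hs.1
      have hsv : s ≤ v := hs.2
      have hsT : s < T := lt_of_le_of_lt hsv hvT
      have hs00 : (0:ℝ) ≤ s := hu0.trans hsu
      have hshalf : 2⁻¹ * v ≤ s := le_trans hhalf hsu
      have hs0' : (0:ℝ) < s := by linarith
      have hsub : s ≤ (R+1)*v := by linarith [mul_nonneg hR.le hv0.le]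
      have hRs1 : 2⁻¹ * v ≤ R + s := by linarith
      have hRs2 : R + s ≤ (R+1)*v := by
        have := mul_le_mul_of_nonneg_left (by linarith : (1:ℝ) ≤ v) hR.le
        linarith
      have w1 : wfn R (-r) * v^(-r) ≤ (R+s)^(-r) := window_bound hR hv0 hRs1 hRs2 (-r)
      have w2 : wfn R (α*p) * v^(α*p) ≤ s^(α*p) := window_bound hR hv0 hshalf hsub (α*p)
      have hGs : a * s^α ≤ G s := hlow s ⟨le_trans hSu hsu, hsT⟩
      have hGabs : a * s^α ≤ |G s| := hGs.trans (le_abs_self _)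
      have hsa : (0:ℝ) ≤ a * s^α := mul_nonneg ha.le (Real.rpow_nonneg hs0'.le α)
      have hGp : (a * s^α)^p ≤ |G s|^p := Real.rpow_le_rpow hsa hGabs hp0.le
      have hexp : (a * s^α)^p = a^p * s^(α*p) := by
        rw [Real.mul_rpow ha.le (Real.rpow_nonneg hs0'.le α), ← Real.rpow_mul hs0'.le]
      refine le_trans ?_ (hODI1 s ⟨hs00, hsT⟩)
      have step2 : a^p * (wfn R (α*p) * v^(α*p)) ≤ |G s|^p := by
        calc a^p * (wfn R (α*p) * v^(α*p)) ≤ a^p * s^(α*p) :=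
              mul_le_mul_of_nonneg_left w2 (Real.rpow_nonneg ha.le p)
          _ = (a * s^α)^p := hexp.symm
          _ ≤ |G s|^p := hGp
      apply mul_le_mul
      · exact mul_le_mul_of_nonneg_left w1 hB.le
      · exact step2
      · exact mul_nonneg (Real.rpow_nonneg ha.le p)
          (mul_nonneg (wfn_pos hR _).le (Real.rpow_nonneg hv0.le _))
      · exact mul_nonneg hB.le (Real.rpow_nonneg (by linarith) _)
    have key := ODE1 hF'd hu0 huv hvT hm
      (hF'nn u ⟨hu0, lt_of_le_of_lt huv hvT⟩)
    have hm0 : (0:ℝ) ≤ B * (wfn R (-r) * v^(-r)) * (a^p * (wfn R (α*p) * v^(α*p))) :=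
      mul_nonneg (mul_nonneg hB.le (mul_nonneg (wfn_pos hR _).le (Real.rpow_nonneg hv0.le _)))
        (mul_nonneg (Real.rpow_nonneg ha.le _)
          (mul_nonneg (wfn_pos hR _).le (Real.rpow_nonneg hv0.le _)))
    have hδ2 : δ/2 ≤ 1 - Real.exp (u - v) := exp_gap hδ0 hδ1 hgapδ
    have hvsplit : v^(α*p - r) = v^(α*p) * v^(-r) := by
      rw [show α*p - r = α*p + (-r) by ring, Real.rpow_add hv0]
    calc a₁ * v ^ (α*p - r)
        = δ/2 * (B * (wfn R (-r) * v^(-r)) * (a^p * (wfn R (α*p) * v^(α*p)))) := by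
          rw [ha₁def, hvsplit]; ring
      _ ≤ (1 - Real.exp (u - v)) * (B * (wfn R (-r) * v^(-r)) * (a^p * (wfn R (α*p) * v^(α*p)))) :=
          mul_le_mul_of_nonneg_right hδ2 hm0
      _ ≤ F' v := key
  -- Substep 2 : lower bound for F
  have h2 : ∀ v, (1+δ)*((1+δ)*S) ≤ v → v < T → a₂ * v ^ (α*p - r + 1) ≤ F v := by
    intro v hv hvT
    obtain ⟨hSu, hhalf, huv, hgap, hv2, hgapδ⟩ := window_facts hS1 hδ0 hδ1 hv
    obtain ⟨u, hudef⟩ : ∃ x:ℝ, x = v/(1+δ) := ⟨_, rfl⟩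
    rw [← hudef] at hSu hhalf huv hgap hgapδ
    have hv0 : (0:ℝ) < v := by linarith
    have hu0 : (0:ℝ) ≤ u := by linarith
    have hm : ∀ s ∈ Icc u v, a₁ * (wfn R (α*p - r) * v^(α*p - r)) ≤ F' s := by
      intro s hs
      have hsu : u ≤ s := hs.1
      have hsv : s ≤ v := hs.2
      have hsT : s < T := lt_of_le_of_lt hsv hvT
      have hshalf : 2⁻¹ * v ≤ s := le_trans hhalf hsu
      have hsub : s ≤ (R+1)*v := by linarith [mul_nonneg hR.le hv0.le]
      have w2 : wfn R (α*p - r) * v^(α*p - r) ≤ s^(α*p - r) := window_bound hR hv0 hshalf hsub _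
      calc a₁ * (wfn R (α*p - r) * v^(α*p - r)) ≤ a₁ * s^(α*p - r) :=
            mul_le_mul_of_nonneg_left w2 ha₁.le
        _ ≤ F' s := h1 s (le_trans hSu hsu) hsT
    have key := ODE0 hFd hu0 huv hvT hm
    have hFu : 0 ≤ F u := hFnn u ⟨hu0, lt_of_le_of_lt huv hvT⟩
    have hm0 : (0:ℝ) ≤ a₁ * (wfn R (α*p - r) * v^(α*p - r)) :=
      mul_nonneg ha₁.le (mul_nonneg (wfn_pos hR _).le (Real.rpow_nonneg hv0.le _))
    have hsplit : v^(α*p - r + 1) = v^(α*p - r) * v := Real.rpow_add_one hv0.ne' _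
    have hstep : a₂ * v ^ (α*p - r + 1) ≤ a₁ * (wfn R (α*p - r) * v^(α*p - r)) * (δ*v/2) :=
      le_of_eq (by rw [ha₂def, hsplit]; ring)
    calc a₂ * v ^ (α*p - r + 1) ≤ a₁ * (wfn R (α*p - r) * v^(α*p - r)) * (δ*v/2) := hstep
      _ ≤ a₁ * (wfn R (α*p - r) * v^(α*p - r)) * (v - u) := mul_le_mul_of_nonneg_left hgap hm0
      _ ≤ F u + a₁ * (wfn R (α*p - r) * v^(α*p - r)) * (v - u) := by linarith
      _ ≤ F v := key
  -- Substep 3 : lower bound for G'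
  have h3 : ∀ v, (1+δ)*((1+δ)*((1+δ)*S)) ≤ v → v < T →
      a₃ * v ^ (q*(α*p - r + 1) + 1 - ρ) ≤ G' v := by
    intro v hv hvT
    obtain ⟨hSu, hhalf, huv, hgap, hv2, hgapδ⟩ := window_facts hS2 hδ0 hδ1 hv
    obtain ⟨u, hudef⟩ : ∃ x:ℝ, x = v/(1+δ) := ⟨_, rfl⟩
    rw [← hudef] at hSu hhalf huv hgap hgapδ
    have hv0 : (0:ℝ) < v := by linarith
    have hu0 : (0:ℝ) ≤ u := by linarith
    obtain ⟨m, hmdef⟩ : ∃ x:ℝ, x = B' * (wfn R (-ρ) * v^(-ρ)) *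
      (a₂^q * (wfn R (q*(α*p - r + 1)) * v^(q*(α*p - r + 1)))) := ⟨_, rfl⟩
    have hm0 : 0 ≤ m := by
      rw [hmdef]
      exact mul_nonneg (mul_nonneg hB'.le (mul_nonneg (wfn_pos hR _).le
          (Real.rpow_nonneg hv0.le _)))
        (mul_nonneg (Real.rpow_nonneg ha₂.le _)
          (mul_nonneg (wfn_pos hR _).le (Real.rpow_nonneg hv0.le _)))
    have hm : ∀ s ∈ Icc u v, m ≤ G'' s + μ/(1+s) * G' s := by
      intro s hs
      have hsu : u ≤ s := hs.1
      have hsv : s ≤ v := hs.2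
      have hsT : s < T := lt_of_le_of_lt hsv hvT
      have hs00 : (0:ℝ) ≤ s := hu0.trans hsu
      have hshalf : 2⁻¹ * v ≤ s := le_trans hhalf hsu
      have hs0' : (0:ℝ) < s := by linarith
      have hsub : s ≤ (R+1)*v := by linarith [mul_nonneg hR.le hv0.le]
      have hRs1 : 2⁻¹ * v ≤ R + s := by linarith
      have hRs2 : R + s ≤ (R+1)*v := by
        have := mul_le_mul_of_nonneg_left (by linarith : (1:ℝ) ≤ v) hR.le
        linarith
      have w1 : wfn R (-ρ) * v^(-ρ) ≤ (R+s)^(-ρ) := window_bound hR hv0 hRs1 hRs2 (-ρ)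
      have w2 : wfn R (q*(α*p - r + 1)) * v^(q*(α*p - r + 1)) ≤ s^(q*(α*p - r + 1)) :=
        window_bound hR hv0 hshalf hsub _
      have hFs : a₂ * s^(α*p - r + 1) ≤ F s := h2 s (le_trans hSu hsu) hsT
      have hFabs : a₂ * s^(α*p - r + 1) ≤ |F s| := hFs.trans (le_abs_self _)
      have hsa : (0:ℝ) ≤ a₂ * s^(α*p - r + 1) :=
        mul_nonneg ha₂.le (Real.rpow_nonneg hs0'.le _)
      have hFq : (a₂ * s^(α*p - r + 1))^q ≤ |F s|^q := Real.rpow_le_rpow hsa hFabs hq0.le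
      have hexp : (a₂ * s^(α*p - r + 1))^q = a₂^q * s^((α*p - r + 1)*q) := by
        rw [Real.mul_rpow ha₂.le (Real.rpow_nonneg hs0'.le _), ← Real.rpow_mul hs0'.le]
      have hexp2 : (α*p - r + 1)*q = q*(α*p - r + 1) := by ring
      refine le_trans ?_ (hODI2 s ⟨hs00, hsT⟩)
      have step2 : a₂^q * (wfn R (q*(α*p - r + 1)) * v^(q*(α*p - r + 1))) ≤ |F s|^q := by
        calc a₂^q * (wfn R (q*(α*p - r + 1)) * v^(q*(α*p - r + 1)))
            ≤ a₂^q * s^(q*(α*p - r + 1)) :=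
              mul_le_mul_of_nonneg_left w2 (Real.rpow_nonneg ha₂.le q)
          _ = (a₂ * s^(α*p - r + 1))^q := by rw [hexp, hexp2]
          _ ≤ |F s|^q := hFq
      rw [hmdef]
      apply mul_le_mul
      · exact mul_le_mul_of_nonneg_left w1 hB'.le
      · exact step2
      · exact mul_nonneg (Real.rpow_nonneg ha₂.le _)
          (mul_nonneg (wfn_pos hR _).le (Real.rpow_nonneg hv0.le _))
      · exact mul_nonneg hB'.le (Real.rpow_nonneg (by linarith) _)
    have hG'u : 0 ≤ G' u := hG'nn u ⟨hu0, lt_of_le_of_lt huv hvT⟩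
    have key := ODE2 hμ hG'd hu0 huv hvT hm0 hm hG'u
    -- key : m * ((1+u)^μ * (v-u)) ≤ G' v * ((μ+1) * (1+v)^μ)
    have h1v : (0:ℝ) < 1 + v := by linarith
    have h1u : (0:ℝ) < 1 + u := by linarith
    have hA : (2:ℝ)⁻¹^μ * (1+v)^μ ≤ (1+u)^μ := by
      have h21 : 2⁻¹ * (1+v) ≤ 1 + u := by linarith
      calc (2:ℝ)⁻¹^μ * (1+v)^μ = (2⁻¹ * (1+v))^μ := (Real.mul_rpow (by norm_num) h1v.le).symm
        _ ≤ (1+u)^μ := Real.rpow_le_rpow (by linarith) h21 hμ.le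
    have hgoal : a₃ * v^(q*(α*p - r + 1) + 1 - ρ) * ((μ+1) * (1+v)^μ)
        ≤ m * ((1+u)^μ * (v-u)) := by
      have hsplit : v^(q*(α*p - r + 1) + 1 - ρ) = v^(q*(α*p - r + 1) - ρ) * v := by
        rw [show q*(α*p - r + 1) + 1 - ρ = (q*(α*p - r + 1) - ρ) + 1 by ring,
          Real.rpow_add_one hv0.ne']
      have hvsplit : v^(q*(α*p - r + 1) - ρ) = v^(q*(α*p - r + 1)) * v^(-ρ) := by
        rw [show q*(α*p - r + 1) - ρ = q*(α*p - r + 1) + (-ρ) by ring, Real.rpow_add hv0]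
      have heq : a₃ * v^(q*(α*p - r + 1) + 1 - ρ) * ((μ+1) * (1+v)^μ)
          = m * (((2:ℝ)⁻¹^μ * (1+v)^μ) * (δ*v/2)) := by
        rw [ha₃def, hmdef, hsplit, hvsplit]
        field_simp
      rw [heq]
      apply mul_le_mul_of_nonneg_left _ hm0
      apply mul_le_mul hA hgap
        (by linarith [mul_nonneg hδ0.le hv0.le] : (0:ℝ) ≤ δ*v/2)
        (Real.rpow_nonneg h1u.le μ)
    have hD : (0:ℝ) < (μ+1) * (1+v)^μ :=
      mul_pos (by linarith) (Real.rpow_pos_of_pos h1v μ)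
    have := le_trans hgoal key
    exact le_of_mul_le_mul_right this hD
  -- Substep 4 : lower bound for G, conclusion
  intro t ht
  obtain ⟨ht4, htT⟩ := ht
  have hv : (1+δ)*((1+δ)*((1+δ)*((1+δ)*S))) ≤ t := by
    have hre : (1+δ)^4*S = (1+δ)*((1+δ)*((1+δ)*((1+δ)*S))) := by ring
    linarith [hre ▸ ht4]
  obtain ⟨hSu, hhalf, huv, hgap, hv2, hgapδ⟩ := window_facts hS3 hδ0 hδ1 hv
  obtain ⟨u, hudef⟩ : ∃ x:ℝ, x = t/(1+δ) := ⟨_, rfl⟩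
  rw [← hudef] at hSu hhalf huv hgap hgapδ
  have hv0 : (0:ℝ) < t := by linarith
  have hu0 : (0:ℝ) ≤ u := by linarith
  have hm : ∀ s ∈ Icc u t, a₃ * (wfn R (q*(α*p - r + 1) + 1 - ρ) * t^(q*(α*p - r + 1) + 1 - ρ))
      ≤ G' s := by
    intro s hs
    have hsu : u ≤ s := hs.1
    have hsv : s ≤ t := hs.2
    have hsT : s < T := lt_of_le_of_lt hsv htT
    have hshalf : 2⁻¹ * t ≤ s := le_trans hhalf hsu
    have hsub : s ≤ (R+1)*t := by linarith [mul_nonneg hR.le hv0.le]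
    have w2 : wfn R (q*(α*p - r + 1) + 1 - ρ) * t^(q*(α*p - r + 1) + 1 - ρ)
        ≤ s^(q*(α*p - r + 1) + 1 - ρ) := window_bound hR hv0 hshalf hsub _
    calc a₃ * (wfn R (q*(α*p - r + 1) + 1 - ρ) * t^(q*(α*p - r + 1) + 1 - ρ))
        ≤ a₃ * s^(q*(α*p - r + 1) + 1 - ρ) := mul_le_mul_of_nonneg_left w2 ha₃.le
      _ ≤ G' s := h3 s (le_trans hSu hsu) hsT
  have key := ODE0 hGd hu0 huv htT hm
  have hGu : 0 ≤ G u := hGnn u ⟨hu0, lt_of_le_of_lt huv htT⟩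
  have hm0 : (0:ℝ) ≤ a₃ * (wfn R (q*(α*p - r + 1) + 1 - ρ) * t^(q*(α*p - r + 1) + 1 - ρ)) :=
    mul_nonneg ha₃.le (mul_nonneg (wfn_pos hR _).le (Real.rpow_nonneg hv0.le _))
  have hsplit : t^(q*(α*p - r + 1) + 2 - ρ) = t^(q*(α*p - r + 1) + 1 - ρ) * t := by
    rw [show q*(α*p - r + 1) + 2 - ρ = (q*(α*p - r + 1) + 1 - ρ) + 1 by ring,
      Real.rpow_add_one hv0.ne']
  have hcoef : (δ/2 * (wfn R (q*(α*p - r + 1) + 1 - ρ) *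
        (δ/2 * ((2:ℝ)⁻¹ ^ μ / (μ+1)) * ((B' * wfn R (-ρ) * wfn R (q*(α*p - r + 1))) *
          (δ/2 * (wfn R (α*p - r) * (δ/2 * (B * wfn R (-r) * wfn R (α*p) * a ^ p)))) ^ q))))
      = a₄ := by
    rw [ha₄def, ha₃def, ha₂def, ha₁def]
  rw [hcoef]
  calc a₄ * t ^ (q*(α*p - r + 1) + 2 - ρ)
      = a₃ * (wfn R (q*(α*p - r + 1) + 1 - ρ) * t^(q*(α*p - r + 1) + 1 - ρ)) * (δ*t/2) := by
        rw [ha₄def, hsplit]; ring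
    _ ≤ a₃ * (wfn R (q*(α*p - r + 1) + 1 - ρ) * t^(q*(α*p - r + 1) + 1 - ρ)) * (t - u) :=
        mul_le_mul_of_nonneg_left hgap hm0
    _ ≤ G u + a₃ * (wfn R (q*(α*p - r + 1) + 1 - ρ) * t^(q*(α*p - r + 1) + 1 - ρ)) * (t - u) := by
        linarith
    _ ≤ G t := key

lemma phi_eq {x w₁ cm W₂ w₃ CB a p q : ℝ} (hx : 0 < x) (hw₃ : 0 ≤ w₃) (hCB : 0 ≤ CB)
    (ha : 0 ≤ a) :
    x * (w₁ * (x * cm * (W₂ * (x * (w₃ * (x * (CB * a ^ p)))) ^ q)))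
      = (w₁ * cm * W₂ * (w₃ * CB) ^ q) * x ^ (2*q+2) * a ^ (p*q) := by
  have hx2 : x * x = x ^ (2:ℝ) := by
    rw [show (2:ℝ) = ((2:ℕ):ℝ) by norm_num, Real.rpow_natCast]; ring
  have e1 : x * (w₃ * (x * (CB * a ^ p))) = (x*x) * ((w₃*CB) * a^p) := by ring
  have e2 : ((x*x) * ((w₃*CB) * a^p)) ^ q = (x*x)^q * ((w₃*CB)^q * (a^p)^q) := by
    rw [Real.mul_rpow (mul_nonneg hx.le hx.le)
      (mul_nonneg (mul_nonneg hw₃ hCB) (Real.rpow_nonneg ha p)),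
      Real.mul_rpow (mul_nonneg hw₃ hCB) (Real.rpow_nonneg ha p)]
  rw [e1, e2, Real.rpow_mul ha p q, Real.rpow_add hx (2*q) 2, Real.rpow_mul hx.le 2 q, ← hx2]
  ring

noncomputable def aseqF (A c e K : ℝ) : ℕ → ℝ
  | 0 => A
  | j+1 => c * ((2:ℝ)⁻¹ ^ (j+1)) ^ e * (aseqF A c e K j) ^ K

lemma aseqF_pos {A c e K : ℝ} (hA : 0 < A) (hc : 0 < c) : ∀ j, 0 < aseqF A c e K j
  | 0 => hA
  | j+1 => by
    have := aseqF_pos hA hc (K := K) (e := e) j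
    show 0 < c * ((2:ℝ)⁻¹ ^ (j+1)) ^ e * (aseqF A c e K j) ^ K
    exact mul_pos (mul_pos hc (Real.rpow_pos_of_pos (pow_pos (by norm_num) _) e))
      (Real.rpow_pos_of_pos this K)

lemma aseqF_log {A c e K : ℝ} (hA : 0 < A) (hc : 0 < c) (hK : 1 < K) :
    ∀ j, Real.log (aseqF A c e K j)
      = K^j * (Real.log A + Real.log c / (K-1) - (1/(K-1) + 1/(K-1)^2) * (e * Real.log 2))
        - Real.log c / (K-1) + (((j:ℝ)+1)/(K-1) + 1/(K-1)^2) * (e * Real.log 2) := by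
  have hK1 : (0:ℝ) < K - 1 := by linarith
  intro j
  induction j with
  | zero =>
    show Real.log A = K^0 * _ - _ + _
    rw [pow_zero]
    push_cast
    field_simp
    ring
  | succ j ih =>
    have hprev := aseqF_pos hA hc (K := K) (e := e) j
    have hstep : aseqF A c e K (j+1) = c * ((2:ℝ)⁻¹ ^ (j+1)) ^ e * (aseqF A c e K j) ^ K := rfl
    rw [hstep, Real.log_mul (by positivity) (by positivity),
      Real.log_mul hc.ne' (by positivity),
      Real.log_rpow (pow_pos (by norm_num) _), Real.log_rpow hprev,
      Real.log_pow, Real.log_inv, ih]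
    push_cast
    field_simp
    ring

lemma aseqF_unbounded {A c e K : ℝ} (hA : 0 < A) (hc : 0 < c) (he : 0 ≤ e) (hK : 1 < K)
    (hLZ : Real.log 2
      ≤ Real.log A + Real.log c / (K-1) - (1/(K-1) + 1/(K-1)^2) * (e * Real.log 2))
    (X : ℝ) : ∃ j, X < aseqF A c e K j := by
  have hK1 : (0:ℝ) < K - 1 := by linarith
  have hlog2 : (0:ℝ) < Real.log 2 := Real.log_pos (by norm_num)
  obtain ⟨j, hj⟩ := pow_unbounded_of_one_lt ((X + 1 + Real.log c / (K-1)) / Real.log 2) hK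
  refine ⟨j, ?_⟩
  have h1 : X + 1 + Real.log c / (K-1) < K^j * Real.log 2 := by
    rw [div_lt_iff₀ hlog2] at hj
    linarith
  have h2 : K^j * Real.log 2 - Real.log c / (K-1)
      ≤ Real.log (aseqF A c e K j) := by
    rw [aseqF_log hA hc hK]
    have hKj : (0:ℝ) < K^j := pow_pos (by linarith) j
    have hy : 0 ≤ (((j:ℝ)+1)/(K-1) + 1/(K-1)^2) * (e * Real.log 2) := by
      apply mul_nonneg
      · positivity
      · exact mul_nonneg he hlog2.le
    nlinarith [mul_le_mul_of_nonneg_left hLZ hKj.le]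
  have h3 := Real.add_one_le_exp (Real.log (aseqF A c e K j))
  rw [Real.exp_log (aseqF_pos hA hc j)] at h3
  linarith

lemma prod_ge_one (j : ℕ) : 1 ≤ ∏ i ∈ Finset.range j, (1+(2:ℝ)⁻¹^i)^4 := by
  calc (1:ℝ) = ∏ _i ∈ Finset.range j, 1 := Finset.prod_const_one.symm
    _ ≤ ∏ i ∈ Finset.range j, (1+(2:ℝ)⁻¹^i)^4 := by
      apply Finset.prod_le_prod (fun i _ => by norm_num)
      intro i _
      apply one_le_pow₀
      have : (0:ℝ) ≤ (2:ℝ)⁻¹^i := by positivity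
      linarith

lemma prod_le_exp8 (j : ℕ) : (∏ i ∈ Finset.range j, (1+(2:ℝ)⁻¹^i)^4) ≤ Real.exp 8 := by
  have h1 : ∀ i ∈ Finset.range j, (1+(2:ℝ)⁻¹^i)^4 ≤ Real.exp (4 * (2:ℝ)⁻¹^i) := by
    intro i _
    have hx : (0:ℝ) ≤ (2:ℝ)⁻¹^i := by positivity
    have h2 : (1+(2:ℝ)⁻¹^i) ≤ Real.exp ((2:ℝ)⁻¹^i) := by
      linarith [Real.add_one_le_exp ((2:ℝ)⁻¹^i)]
    calc (1+(2:ℝ)⁻¹^i)^4 ≤ (Real.exp ((2:ℝ)⁻¹^i))^4 := pow_le_pow_left₀ (by linarith) h2 4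
      _ = Real.exp (4 * (2:ℝ)⁻¹^i) := by rw [← Real.exp_nat_mul]; norm_num
  calc (∏ i ∈ Finset.range j, (1+(2:ℝ)⁻¹^i)^4)
      ≤ ∏ i ∈ Finset.range j, Real.exp (4 * (2:ℝ)⁻¹^i) :=
        Finset.prod_le_prod (fun i _ => by positivity) h1
    _ = Real.exp (∑ i ∈ Finset.range j, 4 * (2:ℝ)⁻¹^i) := (Real.exp_sum _ _).symm
    _ ≤ Real.exp 8 := by
        apply Real.exp_le_exp.mpr
        rw [← Finset.mul_sum]
        have := sum_geometric_two_le j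
        simp only [one_div] at this
        linarith

end CompODI

open CompODI

set_option maxHeartbeats 1000000 in
/-- Comparison argument, scale-invariant damping `b(t) = μ/(1+t)`, `μ > 0`,
with a lower bound on the second component `G(t) ≥ Ã t^α` on `[T₀,T)`.  If
`α(pq−1) + q + 2 > rq + ρ`, there are `Ã₀ > 0` and `C̃ > 0` (independent of `Ã` and of the
pair `(F,G)`) such that whenever `Ã ∈ (0,Ã₀]`, no such pair can live on `[0,T)` beyond
`C̃ Ã^{−1/γ}`, `γ = α + (q+2−(rq+ρ))/(pq−1)`.  `C²([0,T))` is encoded through `F, G` together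
with their first and second derivative functions (one-sided at `0`), the second derivatives
being continuous. -/
theorem comparison_ODI_scale_invariant_second_component
    (μ B B' R p q r ρ α T₀ : ℝ)
    (hμ : 0 < μ) (hB : 0 < B) (hB' : 0 < B') (hR : 0 < R)
    (hp : 1 < p) (hq : 1 < q) (hT₀ : 0 < T₀)
    (hα : r * q + ρ < α * (p * q - 1) + q + 2) :
    ∃ A₀ > 0, ∃ C > 0,
      ∀ (T : ℝ) (F F' F'' G G' G'' : ℝ → ℝ) (A : ℝ),
        (∀ t ∈ Set.Ico (0 : ℝ) T, HasDerivWithinAt F (F' t) (Set.Ico 0 T) t) →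
        (∀ t ∈ Set.Ico (0 : ℝ) T, HasDerivWithinAt F' (F'' t) (Set.Ico 0 T) t) →
        ContinuousOn F'' (Set.Ico 0 T) →
        (∀ t ∈ Set.Ico (0 : ℝ) T, HasDerivWithinAt G (G' t) (Set.Ico 0 T) t) →
        (∀ t ∈ Set.Ico (0 : ℝ) T, HasDerivWithinAt G' (G'' t) (Set.Ico 0 T) t) →
        ContinuousOn G'' (Set.Ico 0 T) →
        (∀ t ∈ Set.Ico (0 : ℝ) T, B * (R + t) ^ (-r) * |G t| ^ p ≤ F'' t + F' t) →
        (∀ t ∈ Set.Ico (0 : ℝ) T,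
          B' * (R + t) ^ (-ρ) * |F t| ^ q ≤ G'' t + μ / (1 + t) * G' t) →
        0 ≤ F 0 → 0 ≤ F' 0 → 0 ≤ G 0 → 0 ≤ G' 0 →
        0 < A → A ≤ A₀ →
        (∀ t ∈ Set.Ico T₀ T, A * t ^ α ≤ G t) →
        T ≤ C * A ^ (-(1 / (α + (q + 2 - (r * q + ρ)) / (p * q - 1)))) := by
  have hpq1 : 1 < p * q := by nlinarith
  have hK1 : (0:ℝ) < p * q - 1 := by linarith
  set γ := α + (q + 2 - (r * q + ρ)) / (p * q - 1) with hγdef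
  have hγ : 0 < γ := by
    rw [hγdef, show α + (q + 2 - (r * q + ρ)) / (p * q - 1)
      = (α * (p * q - 1) + (q + 2 - (r * q + ρ))) / (p * q - 1) by
        rw [add_div, mul_div_assoc, div_self hK1.ne', mul_one]]
    apply div_pos (by linarith) hK1
  obtain ⟨c₀, hc₀def⟩ : ∃ x:ℝ, x = wfn R (q*(α*p - r + 1) + 1 - ρ) * ((2:ℝ)⁻¹ ^ μ / (μ+1)) *
      (B' * wfn R (-ρ) * wfn R (q*(α*p - r + 1))) *
      (wfn R (α*p - r) * (B * wfn R (-r) * wfn R (α*p))) ^ q := ⟨_, rfl⟩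
  have hc₀pos : 0 < c₀ := by
    rw [hc₀def]
    refine mul_pos (mul_pos (mul_pos (wfn_pos hR _)
      (div_pos (Real.rpow_pos_of_pos (by norm_num) μ) (by linarith))) ?_) ?_
    · exact mul_pos (mul_pos hB' (wfn_pos hR _)) (wfn_pos hR _)
    · exact Real.rpow_pos_of_pos (mul_pos (wfn_pos hR _)
        (mul_pos (mul_pos hB (wfn_pos hR _)) (wfn_pos hR _))) q
  obtain ⟨Req, hReqdef⟩ : ∃ x:ℝ, x = Real.log 2
      + (1/(p*q-1) + 1/(p*q-1)^2) * ((2*q+2)*Real.log 2) - Real.log c₀/(p*q-1) := ⟨_, rfl⟩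
  obtain ⟨D, hDdef⟩ : ∃ x:ℝ, x = max T₀ 2 := ⟨_, rfl⟩
  have hD2 : 2 ≤ D := hDdef ▸ le_max_right _ _
  have hDT₀ : T₀ ≤ D := hDdef ▸ le_max_left _ _
  have hD0 : (0:ℝ) < D := by linarith
  obtain ⟨c₃, hc₃def⟩ : ∃ x:ℝ, x = D + Real.exp ((|Req|+1)/γ) := ⟨_, rfl⟩
  have hexpc₃ := Real.exp_pos ((|Req|+1)/γ)
  have hc₃pos : 0 < c₃ := by rw [hc₃def]; linarith
  have hc₃log : Req ≤ γ * Real.log c₃ := by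
    have h1 : Real.exp ((|Req|+1)/γ) ≤ c₃ := by rw [hc₃def]; linarith
    have h2 : (|Req|+1)/γ ≤ Real.log c₃ := by
      calc (|Req|+1)/γ = Real.log (Real.exp ((|Req|+1)/γ)) := (Real.log_exp _).symm
        _ ≤ Real.log c₃ := Real.log_le_log (Real.exp_pos _) h1
    have h3 := mul_le_mul_of_nonneg_left h2 hγ.le
    have h4 : γ * ((|Req|+1)/γ) = |Req|+1 := by field_simp
    have h5 : Req ≤ |Req| + 1 := by linarith [le_abs_self Req]
    calc Req ≤ |Req| + 1 := h5
      _ = γ * ((|Req|+1)/γ) := h4.symm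
      _ ≤ γ * Real.log c₃ := h3
  refine ⟨min 1 (Real.exp (-(γ * (|Real.log D| + |Real.log c₃|)))),
    lt_min one_pos (Real.exp_pos _), Real.exp 8 * c₃,
    mul_pos (Real.exp_pos 8) hc₃pos, ?_⟩
  intro T F F' F'' G G' G'' A hFd hF'd _hF'' hGd hG'd _hG'' hODI1 hODI2 hF0 hF'0 hG0 hG'0
    hA hAA₀ hlow
  by_contra hcon
  push_neg at hcon
  -- S₀ and basic bounds
  obtain ⟨S₀, hS₀def⟩ : ∃ x:ℝ, x = c₃ * A ^ (-(1/γ)) := ⟨_, rfl⟩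
  have hApow : 0 < A ^ (-(1/γ)) := Real.rpow_pos_of_pos hA _
  have hS₀pos : 0 < S₀ := by rw [hS₀def]; exact mul_pos hc₃pos hApow
  have hlogS₀ : Real.log S₀ = Real.log c₃ - (1/γ) * Real.log A := by
    rw [hS₀def, Real.log_mul hc₃pos.ne' hApow.ne', Real.log_rpow hA]; ring
  have hlogA : Real.log A ≤ -(γ * (|Real.log D| + |Real.log c₃|)) := by
    calc Real.log A ≤ Real.log (min 1 (Real.exp (-(γ * (|Real.log D| + |Real.log c₃|))))) :=
          Real.log_le_log hA hAA₀
      _ ≤ Real.log (Real.exp (-(γ * (|Real.log D| + |Real.log c₃|)))) :=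
          Real.log_le_log (lt_min one_pos (Real.exp_pos _)) (min_le_right _ _)
      _ = -(γ * (|Real.log D| + |Real.log c₃|)) := Real.log_exp _
  have hDS₀ : D ≤ S₀ := by
    apply (Real.log_le_log_iff hD0 hS₀pos).mp
    rw [hlogS₀]
    have hoγ : (0:ℝ) < 1/γ := by positivity
    have h1 := mul_le_mul_of_nonneg_left hlogA hoγ.le
    have h2 : (1/γ) * (γ * (|Real.log D| + |Real.log c₃|))
        = |Real.log D| + |Real.log c₃| := by field_simp
    rw [mul_neg, h2] at h1
    linarith [le_abs_self (Real.log D), neg_abs_le (Real.log c₃)]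
  have hS₀2 : 2 ≤ S₀ := le_trans hD2 hDS₀
  have hS₀T₀ : T₀ ≤ S₀ := le_trans hDT₀ hDS₀
  have htT : Real.exp 8 * S₀ < T := by
    have he : Real.exp 8 * c₃ * A ^ (-(1/γ)) = Real.exp 8 * S₀ := by rw [hS₀def]; ring
    linarith [he ▸ hcon]
  -- nonnegativity of F, F', G, G'
  have hF'nn : ∀ t ∈ Set.Ico (0:ℝ) T, 0 ≤ F' t := by
    intro t ht
    have hm : ∀ s ∈ Set.Icc (0:ℝ) t, (0:ℝ) ≤ F'' s + F' s := by
      intro s hs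
      have hsI : s ∈ Set.Ico (0:ℝ) T := ⟨hs.1, lt_of_le_of_lt hs.2 ht.2⟩
      have h0 : (0:ℝ) ≤ B * (R + s) ^ (-r) * |G s| ^ p :=
        mul_nonneg (mul_nonneg hB.le (Real.rpow_nonneg (by linarith [hs.1] : (0:ℝ) ≤ R + s) _))
          (Real.rpow_nonneg (abs_nonneg _) _)
      linarith [hODI1 s hsI]
    have h := ODE1 hF'd le_rfl ht.1 ht.2 (m := 0) hm hF'0
    simpa using h
  have hFnn : ∀ t ∈ Set.Ico (0:ℝ) T, 0 ≤ F t := by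
    intro t ht
    have h := ODE0 hFd le_rfl ht.1 ht.2 (m := 0)
      (fun s hs => hF'nn s ⟨hs.1, lt_of_le_of_lt hs.2 ht.2⟩)
    simp only [zero_mul, add_zero] at h
    linarith
  have hG'nn : ∀ t ∈ Set.Ico (0:ℝ) T, 0 ≤ G' t := by
    intro t ht
    have hm : ∀ s ∈ Set.Icc (0:ℝ) t, (0:ℝ) ≤ G'' s + μ/(1+s) * G' s := by
      intro s hs
      have hsI : s ∈ Set.Ico (0:ℝ) T := ⟨hs.1, lt_of_le_of_lt hs.2 ht.2⟩
      have h0 : (0:ℝ) ≤ B' * (R + s) ^ (-ρ) * |F s| ^ q :=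
        mul_nonneg (mul_nonneg hB'.le (Real.rpow_nonneg (by linarith [hs.1] : (0:ℝ) ≤ R + s) _))
          (Real.rpow_nonneg (abs_nonneg _) _)
      linarith [hODI2 s hsI]
    have h := ODE2 hμ hG'd le_rfl ht.1 ht.2 (m := 0) le_rfl hm hG'0
    simp only [zero_mul] at h
    have hc : (0:ℝ) < (μ+1) * (1+t)^μ :=
      mul_pos (by linarith) (Real.rpow_pos_of_pos (by linarith [ht.1]) μ)
    nlinarith [h, hc]
  have hGnn : ∀ t ∈ Set.Ico (0:ℝ) T, 0 ≤ G t := by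
    intro t ht
    have h := ODE0 hGd le_rfl ht.1 ht.2 (m := 0)
      (fun s hs => hG'nn s ⟨hs.1, lt_of_le_of_lt hs.2 ht.2⟩)
    simp only [zero_mul, add_zero] at h
    linarith
  -- the sequences
  obtain ⟨cc, hccdef⟩ : ∃ x:ℝ, x = c₀ * S₀ ^ ((p*q-1)*γ) := ⟨_, rfl⟩
  have hccpos : 0 < cc := by
    rw [hccdef]; exact mul_pos hc₀pos (Real.rpow_pos_of_pos hS₀pos _)
  obtain ⟨Sseq, hSseqdef⟩ : ∃ f : ℕ → ℝ,
      ∀ j, f j = S₀ * ∏ i ∈ Finset.range j, (1+(2:ℝ)⁻¹^i)^4 := ⟨_, fun _ => rfl⟩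
  have hSseqS₀ : ∀ j, S₀ ≤ Sseq j := by
    intro j
    rw [hSseqdef j]
    nlinarith [prod_ge_one j, hS₀pos]
  have hSseq2 : ∀ j, 2 ≤ Sseq j := fun j => le_trans hS₀2 (hSseqS₀ j)
  have hSseqle : ∀ j, Sseq j ≤ Real.exp 8 * S₀ := by
    intro j
    rw [hSseqdef j]
    nlinarith [prod_le_exp8 j, hS₀pos]
  have hSseqsucc : ∀ j, Sseq (j+1) = (1+(2:ℝ)⁻¹^j)^4 * Sseq j := by
    intro j
    rw [hSseqdef (j+1), hSseqdef j, Finset.prod_range_succ]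
    ring
  have hexpeq : q*(α*p - r + 1) + 2 - ρ = α + (p*q-1)*γ := by
    rw [hγdef, mul_add (p*q-1), mul_div_assoc', mul_div_cancel_left₀ _ hK1.ne']; ring
  have hKγ : (0:ℝ) ≤ (p*q-1)*γ := mul_nonneg hK1.le hγ.le
  -- main induction
  have main : ∀ j, ∀ t, Sseq j ≤ t → t < T → aseqF A cc (2*q+2) (p*q) j * t ^ α ≤ G t := by
    intro j
    induction j with
    | zero =>
      intro t hSt htT'
      have h0 : Sseq 0 ≤ t := hSt
      rw [hSseqdef 0] at h0
      simp only [Finset.range_zero, Finset.prod_empty, mul_one] at h0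
      exact hlow t ⟨le_trans hS₀T₀ h0, htT'⟩
    | succ j ih =>
      intro t hSt htT'
      have haj : 0 < aseqF A cc (2*q+2) (p*q) j := aseqF_pos hA hccpos j
      have hδ0 : (0:ℝ) < (2:ℝ)⁻¹^j := by positivity
      have hδ1 : (2:ℝ)⁻¹^j ≤ 1 := pow_le_one₀ (by norm_num) (by norm_num)
      have hdom : (1+(2:ℝ)⁻¹^j)^4 * Sseq j ≤ t := le_trans (le_of_eq (hSseqsucc j).symm) hSt
      have hstep := step hμ hB hB' hR hp hq hFd hF'd hGd hG'd hODI1 hODI2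
        hF'nn hFnn hG'nn hGnn (hSseq2 j) hδ0 hδ1 haj
        (fun s hs => ih s hs.1 hs.2) t ⟨hdom, htT'⟩
      have ht0 : (0:ℝ) < t := lt_of_lt_of_le (by norm_num) (le_trans (hSseq2 (j+1)) hSt)
      have hxpos : (0:ℝ) < (2:ℝ)⁻¹^j/2 := by positivity
      have hCBnn : (0:ℝ) ≤ B * wfn R (-r) * wfn R (α*p) :=
        (mul_pos (mul_pos hB (wfn_pos hR _)) (wfn_pos hR _)).le
      rw [phi_eq hxpos (wfn_pos hR _).le hCBnn haj.le, ← hc₀def,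
        show (2:ℝ)⁻¹^j/2 = (2:ℝ)⁻¹^(j+1) by rw [pow_succ]; ring,
        show q*(α*p - r + 1) + 2 - ρ = (p*q-1)*γ + α by rw [hexpeq]; ring,
        Real.rpow_add ht0] at hstep
      have hmono : S₀ ^ ((p*q-1)*γ) ≤ t ^ ((p*q-1)*γ) :=
        Real.rpow_le_rpow hS₀pos.le (le_trans (hSseqS₀ (j+1)) hSt) hKγ
      have hpre : (0:ℝ) ≤ c₀ * ((2:ℝ)⁻¹^(j+1)) ^ (2*q+2) * (aseqF A cc (2*q+2) (p*q) j) ^ (p*q) :=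
        (mul_pos (mul_pos hc₀pos (Real.rpow_pos_of_pos (by positivity) _))
          (Real.rpow_pos_of_pos haj _)).le
      calc aseqF A cc (2*q+2) (p*q) (j+1) * t ^ α
          = c₀ * ((2:ℝ)⁻¹^(j+1)) ^ (2*q+2) * (aseqF A cc (2*q+2) (p*q) j) ^ (p*q)
            * (S₀ ^ ((p*q-1)*γ) * t ^ α) := by
            show cc * ((2:ℝ)⁻¹ ^ (j+1)) ^ (2*q+2) * (aseqF A cc (2*q+2) (p*q) j) ^ (p*q) * t ^ α
              = _
            rw [hccdef]; ring
        _ ≤ c₀ * ((2:ℝ)⁻¹^(j+1)) ^ (2*q+2) * (aseqF A cc (2*q+2) (p*q) j) ^ (p*q)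
            * (t ^ ((p*q-1)*γ) * t ^ α) := by
            apply mul_le_mul_of_nonneg_left _ hpre
            exact mul_le_mul_of_nonneg_right hmono (Real.rpow_nonneg ht0.le α)
        _ ≤ G t := hstep
  -- divergence and contradiction
  have hLZ : Real.log 2 ≤ Real.log A + Real.log cc/(p*q-1)
      - (1/(p*q-1) + 1/(p*q-1)^2) * ((2*q+2)*Real.log 2) := by
    have hlogcc : Real.log cc = Real.log c₀ + (p*q-1)*γ*Real.log S₀ := by
      rw [hccdef, Real.log_mul hc₀pos.ne' (Real.rpow_pos_of_pos hS₀pos _).ne',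
        Real.log_rpow hS₀pos]
      try ring
    rw [hlogcc, hlogS₀,
      show Real.log A + (Real.log c₀ + (p*q-1)*γ*(Real.log c₃ - 1/γ * Real.log A))/(p*q-1)
        = Real.log c₀/(p*q-1) + γ * Real.log c₃
        + (Real.log A - Real.log A * ((p*q-1)*γ*(1/γ))/(p*q-1)) from by field_simp; try ring]
    have hcancel : Real.log A - Real.log A * ((p*q-1)*γ*(1/γ))/(p*q-1) = 0 := by
      field_simp
      ring
    rw [hcancel, add_zero]
    rw [hReqdef] at hc₃log
    linarith
  have htpos : (0:ℝ) < Real.exp 8 * S₀ := mul_pos (Real.exp_pos 8) hS₀pos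
  have htα : (0:ℝ) < (Real.exp 8 * S₀) ^ α := Real.rpow_pos_of_pos htpos α
  obtain ⟨j, hj⟩ := aseqF_unbounded hA hccpos (by linarith : (0:ℝ) ≤ 2*q+2) hpq1 hLZ
    (G (Real.exp 8 * S₀) / (Real.exp 8 * S₀) ^ α)
  have hGt := main j (Real.exp 8 * S₀) (hSseqle j) htT
  rw [div_lt_iff₀ htα] at hj
  linarith
end

section
/- Let p, q > 1 (so pq > 1), let D, Q > 0, and let (B_j)_{j ≥ 0} be a sequence of positive real numbers satisfying B_j ≥ D Q^{−j} B_{j−1}^{pq} for all j ≥ 1. Then for every j ≥ 0, ln B_j ≥ (pq)^j [ ln B₀ − (pq ln Q)/(pq−1)² + (ln D)/(pq−1) ] + (ln Q)/(pq−1) · [ 1/(pq−1) + j + 1 ] − (ln D)/(pq−1). -/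
open Real

/-- If `p, q > 1`, `D, Q > 0` and a sequence of positive reals satisfies
`B_j ≥ D Q^{-j} B_{j-1}^{pq}` for all `j ≥ 1`, then for every `j`,
`ln B_j ≥ (pq)^j [ln B₀ − pq ln Q/(pq−1)² + ln D/(pq−1)] + (ln Q/(pq−1))(1/(pq−1)+j+1)
  − ln D/(pq−1)`. -/
theorem log_lower_bound_of_iteration
    (p q D Q : ℝ) (hp : 1 < p) (hq : 1 < q) (hD : 0 < D) (hQ : 0 < Q)
    (B : ℕ → ℝ) (hBpos : ∀ j, 0 < B j)
    (hrec : ∀ j : ℕ, 1 ≤ j → D * Q ^ (-(j : ℝ)) * B (j - 1) ^ (p * q) ≤ B j) :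
    ∀ j : ℕ,
      (p * q) ^ (j : ℕ) *
          (Real.log (B 0) - p * q * Real.log Q / (p * q - 1) ^ 2
            + Real.log D / (p * q - 1))
        + Real.log Q / (p * q - 1) * (1 / (p * q - 1) + (j : ℝ) + 1)
        - Real.log D / (p * q - 1) ≤ Real.log (B j) := by
  have hr : 0 < p * q - 1 := by nlinarith
  intro j
  induction j with
  | zero =>
    have : (p * q) ^ (0 : ℕ) *
          (Real.log (B 0) - p * q * Real.log Q / (p * q - 1) ^ 2
            + Real.log D / (p * q - 1))
        + Real.log Q / (p * q - 1) * (1 / (p * q - 1) + (0 : ℝ) + 1)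
        - Real.log D / (p * q - 1) = Real.log (B 0) := by
      field_simp
      ring
    simp only [Nat.cast_zero] at this ⊢
    linarith [this.le]
  | succ j ih =>
    have hlog : Real.log D + (-(j + 1 : ℝ)) * Real.log Q + (p * q) * Real.log (B j)
        ≤ Real.log (B (j + 1)) := by
      have h := hrec (j + 1) (by omega)
      simp only [Nat.add_sub_cancel] at h
      have hQp : (0:ℝ) < Q ^ (-((j + 1 : ℕ) : ℝ)) := Real.rpow_pos_of_pos hQ _
      have hBp : (0:ℝ) < B j ^ (p * q) := Real.rpow_pos_of_pos (hBpos j) _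
      have hpos : (0:ℝ) < D * Q ^ (-((j + 1 : ℕ) : ℝ)) * B j ^ (p * q) :=
        mul_pos (mul_pos hD hQp) hBp
      calc Real.log D + (-(j + 1 : ℝ)) * Real.log Q + (p * q) * Real.log (B j)
          = Real.log (D * Q ^ (-((j + 1 : ℕ) : ℝ)) * B j ^ (p * q)) := by
            rw [Real.log_mul (by positivity) (ne_of_gt hBp),
              Real.log_mul (ne_of_gt hD) (ne_of_gt hQp),
              Real.log_rpow hQ, Real.log_rpow (hBpos j)]
            push_cast
            ring
        _ ≤ Real.log (B (j + 1)) := Real.log_le_log hpos h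
    have key : (p * q) ^ (j + 1 : ℕ) *
          (Real.log (B 0) - p * q * Real.log Q / (p * q - 1) ^ 2
            + Real.log D / (p * q - 1))
        + Real.log Q / (p * q - 1) * (1 / (p * q - 1) + ((j:ℝ) + 1) + 1)
        - Real.log D / (p * q - 1)
        = Real.log D + (-(j + 1 : ℝ)) * Real.log Q + (p * q) *
          ((p * q) ^ (j : ℕ) *
          (Real.log (B 0) - p * q * Real.log Q / (p * q - 1) ^ 2
            + Real.log D / (p * q - 1))
        + Real.log Q / (p * q - 1) * (1 / (p * q - 1) + (j:ℝ) + 1)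
        - Real.log D / (p * q - 1)) := by
      field_simp
      ring
    have hmul := mul_le_mul_of_nonneg_left ih (by nlinarith : (0:ℝ) ≤ p * q)
    push_cast
    push_cast at key
    linarith
end
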